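/- arXiv:0807.3498 — 8 statements merged into one kernel-verified Lean document; each statement's English description precedes it below -/
import Mathlib

section
/- Growth formula for derivatives: Suppose (R̂_k) has linear growth with growth generator R̂#. Then for every multi-index I = (i₁,i₂) there exists a constant C such that for all k ≥ 1, | D_I R_k(X₀) − R#(X₀) · ( i^{|I|} · M₁^{i₁} · M₂^{i₂} / (|I|+1) ) · k^{|I|+1} | ≤ C·k^{|I|}, where i denotes the imaginary unit. -/
open Complex Real Filter

noncomputable section

/-- The trigonometric sum `A(X) = Σ_{V ∈ ℤ²} Â(V) · exp(i X·V)` of a finitely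
supported function `Â : ℤ² → ℤ`. -/
def trigSum (A : ℤ × ℤ → ℤ) (X : ℝ × ℝ) : ℂ :=
  ∑ᶠ V : ℤ × ℤ, (A V : ℂ) *
    Complex.exp (Complex.I * ((X.1 * (V.1 : ℝ) + X.2 * (V.2 : ℝ) : ℝ) : ℂ))

/-- First partial derivative `∂/∂x₁` of a complex-valued function on `ℝ²`. -/
def pd1 (f : ℝ × ℝ → ℂ) : ℝ × ℝ → ℂ := fun x => deriv (fun t => f (t, x.2)) x.1

/-- Second partial derivative `∂/∂x₂` of a complex-valued function on `ℝ²`. -/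
def pd2 (f : ℝ × ℝ → ℂ) : ℝ × ℝ → ℂ := fun x => deriv (fun t => f (x.1, t)) x.2

/-- The mixed partial derivative `D_I = ∂^{|I|}/∂x₁^{i₁}∂x₂^{i₂}` for the
multi-index `I = (i₁, i₂)` (complex-valued functions). -/
def DI (i₁ i₂ : ℕ) (f : ℝ × ℝ → ℂ) : ℝ × ℝ → ℂ := pd1^[i₁] (pd2^[i₂] f)

/-- First partial derivative `∂/∂x₁` of a real-valued function on `ℝ²`. -/
def pd1R (f : ℝ × ℝ → ℝ) : ℝ × ℝ → ℝ := fun x => deriv (fun t => f (t, x.2)) x.1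

/-- Second partial derivative `∂/∂x₂` of a real-valued function on `ℝ²`. -/
def pd2R (f : ℝ × ℝ → ℝ) : ℝ × ℝ → ℝ := fun x => deriv (fun t => f (x.1, t)) x.2

/-- The mixed partial derivative `D_I = ∂^{|I|}/∂x₁^{i₁}∂x₂^{i₂}` for the
multi-index `I = (i₁, i₂)` (real-valued functions). -/
def DIR (i₁ i₂ : ℕ) (f : ℝ × ℝ → ℝ) : ℝ × ℝ → ℝ := pd1R^[i₁] (pd2R^[i₂] f)

/-- `(R̂_k)` has linear growth with growth generator `R̂#`:
`R̂_{k+1}(V) = R̂_k(V) + R̂#(V − k·(M₁,M₂))`. -/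
def LinearGrowth (M₁ M₂ : ℤ) (Rhat : ℕ → ℤ × ℤ → ℤ) (Rsharp : ℤ × ℤ → ℤ) : Prop :=
  ∀ (k : ℕ) (V : ℤ × ℤ),
    Rhat (k + 1) V = Rhat k V + Rsharp (V.1 - (k : ℤ) * M₁, V.2 - (k : ℤ) * M₂)

/-! By linear growth, the increment `D_I R_{k+1}(X₀) - D_I R_k(X₀)` is the sum over `W` of
`R̂#(W) (i(W₁ + kM₁))^{i₁} (i(W₂ + kM₂))^{i₂} exp(i X₀·(W + kM))`. As `X₀·M ∈ 2πℤ`, the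
exponential does not depend on `k`, so the increment is the value at `k` of a polynomial of
degree `≤ |I|` with leading coefficient `R#(X₀) (iM₁)^{i₁} (iM₂)^{i₂}`. Summing it over
`0 ≤ j < k` gives that coefficient times `k^{|I|+1}/(|I|+1)` up to `O(k^{|I|})`, because
`∑_{j<k} j^n` and `∫₀^k tⁿ dt` differ by at most `kⁿ`. -/

theorem abs_sum_range_pow_sub_le (n k : ℕ) :
    |∑ j ∈ Finset.range k, (j : ℝ) ^ n - (k : ℝ) ^ (n + 1) / (n + 1)| ≤ (k : ℝ) ^ n := by
  have hmono : MonotoneOn (fun x : ℝ => x ^ n) (Set.Icc 0 (0 + k)) :=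
    pow_left_monotoneOn.mono fun x hx => hx.1
  have hlower := hmono.sum_le_integral
  have hupper := hmono.integral_le_sum
  have htelescope : ∑ j ∈ Finset.range k, ((j + 1 : ℕ) : ℝ) ^ n
      - ∑ j ∈ Finset.range k, (j : ℝ) ^ n = (k : ℝ) ^ n - (0 : ℝ) ^ n := by
    rw [← Finset.sum_sub_distrib]
    exact (Finset.sum_range_sub (fun j : ℕ => (j : ℝ) ^ n) k).trans (by rw [Nat.cast_zero])
  simp only [zero_add, integral_pow, zero_pow n.succ_ne_zero, sub_zero] at hlower hupper
  rw [abs_le]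
  constructor <;> linarith [pow_nonneg (le_refl (0 : ℝ)) n]

theorem sum_range_pow_le_of_lt {d n : ℕ} (hd : d < n) (k : ℕ) :
    ∑ j ∈ Finset.range k, (j : ℝ) ^ d ≤ (k : ℝ) ^ n := by
  calc ∑ j ∈ Finset.range k, (j : ℝ) ^ d
      ≤ ∑ _j ∈ Finset.range k, (k : ℝ) ^ (n - 1) := by
        refine Finset.sum_le_sum fun j hj => ?_
        have hjk : j < k := Finset.mem_range.mp hj
        calc (j : ℝ) ^ d ≤ (k : ℝ) ^ d :=
            pow_le_pow_left₀ j.cast_nonneg (by exact_mod_cast hjk.le) d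
          _ ≤ (k : ℝ) ^ (n - 1) :=
            pow_le_pow_right₀ (by exact_mod_cast Nat.one_le_of_lt hjk) (by omega)
    _ = (k : ℝ) ^ n := by
        rw [Finset.sum_const, Finset.card_range, nsmul_eq_mul, ← pow_succ',
          Nat.sub_add_cancel (by omega)]

open Polynomial in
theorem norm_sum_range_eval_sub_le {𝕜 : Type*} [RCLike 𝕜] {p : 𝕜[X]} {n : ℕ}
    (hp : p.natDegree ≤ n) (k : ℕ) :
    ‖∑ j ∈ Finset.range k, p.eval (j : 𝕜) - p.coeff n * (k : 𝕜) ^ (n + 1) / (n + 1)‖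
      ≤ (∑ d ∈ Finset.range (n + 1), ‖p.coeff d‖) * (k : ℝ) ^ n := by
  set s : ℕ → ℝ := fun d => ∑ j ∈ Finset.range k, (j : ℝ) ^ d
  have hsplit : ∑ j ∈ Finset.range k, p.eval (j : 𝕜) - p.coeff n * (k : 𝕜) ^ (n + 1) / (n + 1)
      = ∑ d ∈ Finset.range n, p.coeff d * (s d : 𝕜)
        + p.coeff n * ((s n - (k : ℝ) ^ (n + 1) / (n + 1) : ℝ) : 𝕜) := by
    simp only [eval_eq_sum_range' (Nat.lt_succ_of_le hp), s]
    rw [Finset.sum_comm, Finset.sum_range_succ]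
    push_cast
    simp only [mul_sub, Finset.mul_sum]
    ring
  have hlow : ∀ d ∈ Finset.range n, ‖p.coeff d * (s d : 𝕜)‖ ≤ ‖p.coeff d‖ * (k : ℝ) ^ n := by
    intro d hd
    have hs : 0 ≤ s d := Finset.sum_nonneg fun j _ => by positivity
    rw [norm_mul, RCLike.norm_ofReal, abs_of_nonneg hs]
    exact mul_le_mul_of_nonneg_left (sum_range_pow_le_of_lt (Finset.mem_range.mp hd) k)
      (norm_nonneg _)
  have htop : ‖p.coeff n * ((s n - (k : ℝ) ^ (n + 1) / (n + 1) : ℝ) : 𝕜)‖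
      ≤ ‖p.coeff n‖ * (k : ℝ) ^ n := by
    rw [norm_mul, RCLike.norm_ofReal]
    exact mul_le_mul_of_nonneg_left (abs_sum_range_pow_sub_le n k) (norm_nonneg _)
  rw [hsplit, Finset.sum_range_succ, add_mul, Finset.sum_mul]
  exact (norm_add_le _ _).trans
    (add_le_add ((norm_sum_le _ _).trans (Finset.sum_le_sum hlow)) htop)

open Polynomial in
theorem exists_norm_sub_le_of_sub_eq_eval {𝕜 : Type*} [RCLike 𝕜] {f : ℕ → 𝕜} {p : 𝕜[X]}
    {n : ℕ} (hp : p.natDegree ≤ n) (hf : ∀ j : ℕ, f (j + 1) - f j = p.eval (j : 𝕜)) :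
    ∃ C : ℝ, ∀ k : ℕ, 1 ≤ k →
      ‖f k - p.coeff n * (k : 𝕜) ^ (n + 1) / (n + 1)‖ ≤ C * (k : ℝ) ^ n := by
  refine ⟨‖f 0‖ + ∑ d ∈ Finset.range (n + 1), ‖p.coeff d‖, fun k hk => ?_⟩
  have hfk : f k = f 0 + ∑ j ∈ Finset.range k, p.eval (j : 𝕜) := by
    simp only [← hf, Finset.sum_range_sub, add_sub_cancel]
  have hkn : 1 ≤ (k : ℝ) ^ n := one_le_pow₀ (by exact_mod_cast hk)
  calc ‖f k - p.coeff n * (k : 𝕜) ^ (n + 1) / (n + 1)‖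
      = ‖f 0 + (∑ j ∈ Finset.range k, p.eval (j : 𝕜)
          - p.coeff n * (k : 𝕜) ^ (n + 1) / (n + 1))‖ := by rw [hfk, add_sub_assoc]
    _ ≤ ‖f 0‖ + (∑ d ∈ Finset.range (n + 1), ‖p.coeff d‖) * (k : ℝ) ^ n :=
        norm_add_le_of_le le_rfl (norm_sum_range_eval_sub_le hp k)
    _ ≤ (‖f 0‖ + ∑ d ∈ Finset.range (n + 1), ‖p.coeff d‖) * (k : ℝ) ^ n := by
        nlinarith [norm_nonneg (f 0)]

namespace Polynomial

variable {R : Type*} [CommSemiring R]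

theorem natDegree_linear_pow_le (a b : R) (i : ℕ) : ((C a * X + C b) ^ i).natDegree ≤ i := by
  simpa using natDegree_pow_le_of_le i natDegree_linear_le

theorem natDegree_linear_pow_mul_linear_pow_le (a b c d : R) (i₁ i₂ : ℕ) :
    ((C a * X + C b) ^ i₁ * (C c * X + C d) ^ i₂).natDegree ≤ i₁ + i₂ :=
  natDegree_mul_le_of_le (natDegree_linear_pow_le a b i₁) (natDegree_linear_pow_le c d i₂)

theorem coeff_linear_pow_mul_linear_pow (a b c d : R) (i₁ i₂ : ℕ) :
    ((C a * X + C b) ^ i₁ * (C c * X + C d) ^ i₂).coeff (i₁ + i₂) = a ^ i₁ * c ^ i₂ := by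
  have hpow : ∀ (e f : R) (i : ℕ), ((C e * X + C f) ^ i).coeff i = e ^ i := fun e f i => by
    simpa using coeff_pow_of_natDegree_le (m := i) (natDegree_linear_le (a := e) (b := f))
  rw [coeff_mul_add_eq_of_natDegree_le (natDegree_linear_pow_le a b i₁)
    (natDegree_linear_pow_le c d i₂), hpow, hpow]

end Polynomial

def planeWave (V : ℤ × ℤ) (x : ℝ × ℝ) : ℂ :=
  Complex.exp (Complex.I * ((x.1 * (V.1 : ℝ) + x.2 * (V.2 : ℝ) : ℝ) : ℂ))

theorem hasDerivAt_planeWave_fst (V : ℤ × ℤ) (x : ℝ × ℝ) :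
    HasDerivAt (fun t : ℝ => planeWave V (t, x.2)) (I * V.1 * planeWave V x) x.1 := by
  refine (((((hasDerivAt_id x.1).mul_const (V.1 : ℝ)).add_const
    (x.2 * V.2)).ofReal_comp).const_mul I).cexp.congr_deriv ?_
  simp only [planeWave, id, one_mul, ofReal_intCast]
  ring

theorem hasDerivAt_planeWave_snd (V : ℤ × ℤ) (x : ℝ × ℝ) :
    HasDerivAt (fun t : ℝ => planeWave V (x.1, t)) (I * V.2 * planeWave V x) x.2 := by
  refine (((((hasDerivAt_id x.2).mul_const (V.2 : ℝ)).const_add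
    (x.1 * V.1)).ofReal_comp).const_mul I).cexp.congr_deriv ?_
  simp only [planeWave, id, one_mul, ofReal_intCast]
  ring

theorem planeWave_add (V W : ℤ × ℤ) (x : ℝ × ℝ) :
    planeWave (V + W) x = planeWave V x * planeWave W x := by
  simp only [planeWave, ← Complex.exp_add, Prod.fst_add, Prod.snd_add]
  push_cast
  ring_nf

theorem planeWave_add_mul_period {M₁ M₂ m : ℤ} {x : ℝ × ℝ}
    (hm : x.1 * (M₁ : ℝ) + x.2 * (M₂ : ℝ) = 2 * Real.pi * (m : ℝ)) (W : ℤ × ℤ) (k : ℤ) :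
    planeWave (W + (k * M₁, k * M₂)) x = planeWave W x := by
  have hmC : (x.1 : ℂ) * M₁ + x.2 * M₂ = 2 * Real.pi * m := by exact_mod_cast congrArg ofReal hm
  have hperiod : planeWave (k * M₁, k * M₂) x = 1 := by
    rw [planeWave, ← Complex.exp_int_mul_two_pi_mul_I (k * m)]
    congr 1
    push_cast
    linear_combination (I * k) * hmC
  rw [planeWave_add, hperiod, mul_one]

def trigPoly (S : Finset (ℤ × ℤ)) (c : ℤ × ℤ → ℂ) (x : ℝ × ℝ) : ℂ :=
  ∑ V ∈ S, c V * planeWave V x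

theorem pd1_trigPoly (S : Finset (ℤ × ℤ)) (c : ℤ × ℤ → ℂ) :
    pd1 (trigPoly S c) = trigPoly S (fun V => I * V.1 * c V) := by
  funext x
  refine (HasDerivAt.fun_sum fun V _ =>
    (hasDerivAt_planeWave_fst V x).const_mul (c V)).deriv.trans ?_
  exact Finset.sum_congr rfl fun V _ => by ring

theorem pd2_trigPoly (S : Finset (ℤ × ℤ)) (c : ℤ × ℤ → ℂ) :
    pd2 (trigPoly S c) = trigPoly S (fun V => I * V.2 * c V) := by
  funext x
  refine (HasDerivAt.fun_sum fun V _ =>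
    (hasDerivAt_planeWave_snd V x).const_mul (c V)).deriv.trans ?_
  exact Finset.sum_congr rfl fun V _ => by ring

theorem iterate_pd1_trigPoly (S : Finset (ℤ × ℤ)) (m : ℕ) (c : ℤ × ℤ → ℂ) :
    pd1^[m] (trigPoly S c) = trigPoly S (fun V => (I * V.1) ^ m * c V) := by
  induction m generalizing c with
  | zero => simp
  | succ m ih =>
    rw [Function.iterate_succ_apply, pd1_trigPoly, ih]
    simp only [pow_succ, mul_assoc]

theorem iterate_pd2_trigPoly (S : Finset (ℤ × ℤ)) (m : ℕ) (c : ℤ × ℤ → ℂ) :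
    pd2^[m] (trigPoly S c) = trigPoly S (fun V => (I * V.2) ^ m * c V) := by
  induction m generalizing c with
  | zero => simp
  | succ m ih =>
    rw [Function.iterate_succ_apply, pd2_trigPoly, ih]
    simp only [pow_succ, mul_assoc]

theorem DI_trigPoly (i₁ i₂ : ℕ) (S : Finset (ℤ × ℤ)) (c : ℤ × ℤ → ℂ) :
    DI i₁ i₂ (trigPoly S c) = trigPoly S (fun V => (I * V.1) ^ i₁ * ((I * V.2) ^ i₂ * c V)) := by
  rw [DI, iterate_pd2_trigPoly, iterate_pd1_trigPoly]

theorem support_intCast_mul_subset (A : ℤ × ℤ → ℤ) (g : ℤ × ℤ → ℂ) :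
    Function.support (fun V => (A V : ℂ) * g V) ⊆ Function.support A :=
  (Function.support_mul_subset_left _ _).trans (Function.support_comp_subset Int.cast_zero A)

theorem trigSum_eq_trigPoly {A : ℤ × ℤ → ℤ} {S : Finset (ℤ × ℤ)}
    (hS : Function.support A ⊆ S) : trigSum A = trigPoly S (fun V => A V) := by
  funext x
  exact finsum_eq_sum_of_support_subset _ ((support_intCast_mul_subset A _).trans hS)

def derivWeight (i₁ i₂ : ℕ) (x : ℝ × ℝ) (V : ℤ × ℤ) : ℂ :=
  (I * V.1) ^ i₁ * (I * V.2) ^ i₂ * planeWave V x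

theorem DI_trigSum {A : ℤ × ℤ → ℤ} (hA : (Function.support A).Finite) (i₁ i₂ : ℕ)
    (x : ℝ × ℝ) : DI i₁ i₂ (trigSum A) x = ∑ᶠ V, (A V : ℂ) * derivWeight i₁ i₂ x V := by
  have hS : Function.support A ⊆ hA.toFinset := by simp
  rw [trigSum_eq_trigPoly hS, DI_trigPoly, trigPoly,
    finsum_eq_sum_of_support_subset _ ((support_intCast_mul_subset A _).trans hS)]
  exact Finset.sum_congr rfl fun V _ => by rw [derivWeight]; ring

theorem DI_trigSum_succ_sub_of_linearGrowth {M₁ M₂ : ℤ} {Rhat : ℕ → ℤ × ℤ → ℤ}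
    {Rsharp : ℤ × ℤ → ℤ} (hgrowth : LinearGrowth M₁ M₂ Rhat Rsharp)
    (hfin : ∀ k, (Function.support (Rhat k)).Finite) (hsfin : (Function.support Rsharp).Finite)
    (i₁ i₂ : ℕ) (x : ℝ × ℝ) (k : ℕ) :
    DI i₁ i₂ (trigSum (Rhat (k + 1))) x - DI i₁ i₂ (trigSum (Rhat k)) x
      = ∑ᶠ W, (Rsharp W : ℂ) * derivWeight i₁ i₂ x (W + ((k : ℤ) * M₁, (k : ℤ) * M₂)) := by
  set c : ℤ × ℤ := ((k : ℤ) * M₁, (k : ℤ) * M₂)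
  have hshift : ∀ V : ℤ × ℤ, (V.1 - (k : ℤ) * M₁, V.2 - (k : ℤ) * M₂) = V - c := fun V => rfl
  have hfin_shift :
      (Function.support fun V => (Rsharp (V - c) : ℂ) * derivWeight i₁ i₂ x V).Finite :=
    (hsfin.preimage sub_left_injective.injOn).subset
      (support_intCast_mul_subset (fun V => Rsharp (V - c)) _)
  rw [DI_trigSum (hfin _), DI_trigSum (hfin _)]
  simp only [hgrowth k, hshift, Int.cast_add, add_mul]
  rw [finsum_add_distrib ((hfin k).subset (support_intCast_mul_subset _ _)) hfin_shift,
    add_sub_cancel_left, ← finsum_comp_equiv (Equiv.addRight c)]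
  simp only [Equiv.coe_addRight, add_sub_cancel_right]

open Polynomial in
theorem exists_poly_DI_trigSum_succ_sub {M₁ M₂ m : ℤ} {x : ℝ × ℝ}
    (hm : x.1 * (M₁ : ℝ) + x.2 * (M₂ : ℝ) = 2 * Real.pi * (m : ℝ)) {Rhat : ℕ → ℤ × ℤ → ℤ}
    {Rsharp : ℤ × ℤ → ℤ} (hgrowth : LinearGrowth M₁ M₂ Rhat Rsharp)
    (hfin : ∀ k, (Function.support (Rhat k)).Finite) (hsfin : (Function.support Rsharp).Finite)
    (i₁ i₂ : ℕ) :
    ∃ P : ℂ[X], P.natDegree ≤ i₁ + i₂ ∧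
      P.coeff (i₁ + i₂) = trigSum Rsharp x * ((I * M₁) ^ i₁ * (I * M₂) ^ i₂) ∧
      ∀ j : ℕ, DI i₁ i₂ (trigSum (Rhat (j + 1))) x - DI i₁ i₂ (trigSum (Rhat j)) x
        = P.eval (j : ℂ) := by
  have hS : Function.support Rsharp ⊆ hsfin.toFinset := by simp
  let q : ℤ × ℤ → ℂ[X] := fun W =>
    (C (I * M₁) * X + C (I * W.1)) ^ i₁ * (C (I * M₂) * X + C (I * W.2)) ^ i₂
  refine ⟨∑ W ∈ hsfin.toFinset, C (Rsharp W * planeWave W x) * q W, ?_, ?_, fun j => ?_⟩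
  · exact natDegree_sum_le_of_forall_le _ _ fun W _ =>
      (natDegree_C_mul_le _ _).trans (natDegree_linear_pow_mul_linear_pow_le _ _ _ _ _ _)
  · rw [finsetSum_coeff, trigSum_eq_trigPoly hS, trigPoly, Finset.sum_mul]
    refine Finset.sum_congr rfl fun W _ => ?_
    rw [coeff_C_mul, coeff_linear_pow_mul_linear_pow]
  · rw [DI_trigSum_succ_sub_of_linearGrowth hgrowth hfin hsfin, eval_finsetSum,
      finsum_eq_sum_of_support_subset _ ((support_intCast_mul_subset Rsharp _).trans hS)]
    refine Finset.sum_congr rfl fun W _ => ?_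
    simp only [derivWeight, planeWave_add_mul_period hm, q, eval_mul, eval_pow, eval_add, eval_C,
      eval_X, Prod.fst_add, Prod.snd_add]
    push_cast
    ring

/-- Growth formula for derivatives: for every multi-index `I = (i₁,i₂)` there is a
constant `C` with
`|D_I R_k(X₀) − R#(X₀)·(i^{|I|}·M₁^{i₁}·M₂^{i₂}/(|I|+1))·k^{|I|+1}| ≤ C·k^{|I|}`
for all `k ≥ 1`. -/
theorem DI_trigSum_linearGrowth_asymptotics
    (M₁ M₂ : ℤ) (X₀ : ℝ × ℝ)
    (hX₀ : ∃ m : ℤ, X₀.1 * (M₁ : ℝ) + X₀.2 * (M₂ : ℝ) = 2 * Real.pi * (m : ℝ))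
    (Rhat : ℕ → ℤ × ℤ → ℤ) (Rsharp : ℤ × ℤ → ℤ)
    (hfin : ∀ k, (Function.support (Rhat k)).Finite)
    (hsfin : (Function.support Rsharp).Finite)
    (hgrowth : LinearGrowth M₁ M₂ Rhat Rsharp) :
    ∀ i₁ i₂ : ℕ, ∃ C : ℝ, ∀ k : ℕ, 1 ≤ k →
      ‖DI i₁ i₂ (trigSum (Rhat k)) X₀ -
          trigSum Rsharp X₀ *
            (Complex.I ^ (i₁ + i₂) * (M₁ : ℂ) ^ i₁ * (M₂ : ℂ) ^ i₂ / ((i₁ + i₂ : ℕ) + 1)) *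
            (k : ℂ) ^ (i₁ + i₂ + 1)‖ ≤
        C * (k : ℝ) ^ (i₁ + i₂) := by
  intro i₁ i₂
  obtain ⟨m, hm⟩ := hX₀
  obtain ⟨P, hdeg, hlead, hstep⟩ := exists_poly_DI_trigSum_succ_sub hm hgrowth hfin hsfin i₁ i₂
  obtain ⟨C, hC⟩ := exists_norm_sub_le_of_sub_eq_eval
    (f := fun k => DI i₁ i₂ (trigSum (Rhat k)) X₀) hdeg hstep
  refine ⟨C, fun k hk => ?_⟩
  refine le_of_eq_of_le ?_ (hC k hk)
  rw [hlead]
  congr 2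
  push_cast
  ring

end
end

section
/- Convergence Lemma: Let (F_k)_{k≥1} be a quadratic growth family. Then the rescaled functions G_k(X) = F_k(k⁻²·X) converge in the C^∞ topology to the affine function G(x₁,x₂) = F₁(0,0) + C₁·x₁ + C₂·x₂; that is, every partial derivative of G_k converges, uniformly on each compact subset of ℝ², to the corresponding partial derivative of G. -/
open Filter

noncomputable section

/-!
`G_k` is the power series with coefficients `C_{k,I} k^{-2|I|}`, and on entire power series the
partial derivatives act coefficientwise. On the box `|x₁|, |x₂| ≤ r` the `(i₁, i₂)`-th derivative
of a series is bounded by the majorant `∑ |c_I| (r + i₁ + i₂)^{|I|}`, because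
`n r^{n-1} ≤ (r + 1)^n`. So it suffices that, for every `r`, the majorant of the difference between
the coefficients of `G_k` and those of the affine limit tends to zero: the constant terms agree,
the linear terms converge by (ii), and as soon as `r ≤ k^ε` the terms of degree `≥ 2` are bounded
termwise by those of the sum in (iii).
-/

open Topology

namespace Bivariate

def series (c : ℕ × ℕ → ℝ) (X : ℝ × ℝ) : ℝ := ∑' I : ℕ × ℕ, c I * X.1 ^ I.1 * X.2 ^ I.2

def majorant (c : ℕ × ℕ → ℝ) (r : ℝ) : ℝ := ∑' I : ℕ × ℕ, |c I| * r ^ (I.1 + I.2)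

def IsEntire (c : ℕ × ℕ → ℝ) : Prop :=
  ∀ r : ℝ, 0 ≤ r → Summable fun I : ℕ × ℕ => |c I| * r ^ (I.1 + I.2)

def derivCoeff₁ : (ℕ × ℕ → ℝ) →+ (ℕ × ℕ → ℝ) :=
  AddMonoidHom.mk' (fun c I => ((I.1 : ℝ) + 1) * c (I.1 + 1, I.2)) fun a b => by
    ext I; simp [mul_add]

def derivCoeff₂ : (ℕ × ℕ → ℝ) →+ (ℕ × ℕ → ℝ) :=
  AddMonoidHom.mk' (fun c I => ((I.2 : ℝ) + 1) * c (I.1, I.2 + 1)) fun a b => by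
    ext I; simp [mul_add]

def iteratedDerivCoeff (i₁ i₂ : ℕ) (c : ℕ × ℕ → ℝ) : ℕ × ℕ → ℝ :=
  derivCoeff₁^[i₁] (derivCoeff₂^[i₂] c)

def rescale (c : ℕ × ℕ → ℝ) (s : ℝ) (I : ℕ × ℕ) : ℝ := c I * s ^ (I.1 + I.2)

def affineCoeff (a b₁ b₂ : ℝ) (I : ℕ × ℕ) : ℝ :=
  if I = (0, 0) then a else if I = (1, 0) then b₁ else if I = (0, 1) then b₂ else 0

theorem derivCoeff₂_eq_swap (c : ℕ × ℕ → ℝ) :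
    derivCoeff₂ c = derivCoeff₁ (c ∘ Prod.swap) ∘ Prod.swap := rfl

theorem iteratedDerivCoeff_sub (i₁ i₂ : ℕ) (c d : ℕ × ℕ → ℝ) :
    iteratedDerivCoeff i₁ i₂ (c - d) =
      iteratedDerivCoeff i₁ i₂ c - iteratedDerivCoeff i₁ i₂ d := by
  simp only [iteratedDerivCoeff, iterate_map_sub]

theorem affineCoeff_of_two_le (a b₁ b₂ : ℝ) {I : ℕ × ℕ} (hI : 2 ≤ I.1 + I.2) :
    affineCoeff a b₁ b₂ I = 0 := by
  rcases I with ⟨i, j⟩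
  simp only [affineCoeff, Prod.mk.injEq]
  split_ifs <;> first | rfl | omega

-- `n r^(n-1)` is one of the terms of the binomial expansion of `(r + 1)^n`.
theorem natCast_mul_pow_pred_le {r : ℝ} (hr : 0 ≤ r) (n : ℕ) :
    (n : ℝ) * r ^ (n - 1) ≤ (r + 1) ^ n := by
  cases n with
  | zero => simp
  | succ n =>
    rw [add_pow]
    have := Finset.single_le_sum (f := fun m => r ^ m * 1 ^ (n + 1 - m) * ((n + 1).choose m : ℝ))
      (fun m _ => by positivity) (Finset.mem_range.2 (by omega : n < n + 1 + 1))
    simpa [Nat.choose_succ_self_right, mul_comm] using this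

theorem inv_sq_mul_le_rpow {k r ε : ℝ} (hk : 0 < k) (hr : r ≤ k ^ ε) :
    (k ^ 2)⁻¹ * r ≤ k ^ (-2 + ε) := by
  rw [Real.rpow_add hk, Real.rpow_neg hk.le, Real.rpow_two]
  gcongr

theorem abs_term_le (c : ℕ × ℕ → ℝ) (I : ℕ × ℕ) {X : ℝ × ℝ} {r : ℝ}
    (h₁ : |X.1| ≤ r) (h₂ : |X.2| ≤ r) :
    |c I * X.1 ^ I.1 * X.2 ^ I.2| ≤ |c I| * r ^ (I.1 + I.2) := by
  have hr : 0 ≤ r := (abs_nonneg _).trans h₁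
  rw [abs_mul, abs_mul, abs_pow, abs_pow, pow_add, mul_assoc]
  gcongr

theorem abs_derivCoeff₁_mul_pow_le (c : ℕ × ℕ → ℝ) {r : ℝ} (hr : 0 ≤ r) (I : ℕ × ℕ) :
    |derivCoeff₁ c I| * r ^ (I.1 + I.2) ≤ |c (I.1 + 1, I.2)| * (r + 1) ^ (I.1 + 1 + I.2) := by
  have h₁ : ((I.1 : ℝ) + 1) * r ^ I.1 ≤ (r + 1) ^ (I.1 + 1) := by
    simpa using natCast_mul_pow_pred_le hr (I.1 + 1)
  have h₂ : r ^ I.2 ≤ (r + 1) ^ I.2 := by gcongr; linarith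
  calc |derivCoeff₁ c I| * r ^ (I.1 + I.2)
      = |c (I.1 + 1, I.2)| * (((I.1 : ℝ) + 1) * r ^ I.1 * r ^ I.2) := by
        simp only [derivCoeff₁, AddMonoidHom.mk'_apply, abs_mul,
          abs_of_nonneg (by positivity : (0 : ℝ) ≤ (I.1 : ℝ) + 1), pow_add]
        ring
    _ ≤ |c (I.1 + 1, I.2)| * ((r + 1) ^ (I.1 + 1) * (r + 1) ^ I.2) := by gcongr
    _ = |c (I.1 + 1, I.2)| * (r + 1) ^ (I.1 + 1 + I.2) := by ring

theorem abs_rescale_mul_pow_le (c : ℕ × ℕ → ℝ) {s r q : ℝ} (hs : 0 ≤ s) (hr : 0 ≤ r)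
    (hq : s * r ≤ q) (I : ℕ × ℕ) :
    |rescale c s I| * r ^ (I.1 + I.2) ≤ |c I| * q ^ (I.1 + I.2) := by
  rw [rescale, abs_mul, abs_of_nonneg (by positivity : 0 ≤ s ^ (I.1 + I.2)), mul_assoc, ← mul_pow]
  gcongr

theorem injective_succ_fst : Function.Injective fun I : ℕ × ℕ => (I.1 + 1, I.2) :=
  fun I J h => by simp only [Prod.mk.injEq, Nat.add_right_cancel_iff] at h; exact Prod.ext h.1 h.2

theorem summable_ite_of_nonneg {ι : Type*} {f : ι → ℝ} (hf : Summable f) (h₀ : ∀ i, 0 ≤ f i)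
    (p : ι → Prop) [DecidablePred p] : Summable fun i => if p i then f i else 0 :=
  hf.of_nonneg_of_le (fun i => by split_ifs <;> simp [h₀ i]) fun i => by
    split_ifs <;> simp [h₀ i]

theorem tsum_eq_add_tsum_two_le {f : ℕ × ℕ → ℝ} (hf : Summable f) :
    ∑' I, f I =
      f (0, 0) + f (1, 0) + f (0, 1) + ∑' I : ℕ × ℕ, if 2 ≤ I.1 + I.2 then f I else 0 := by
  set low : ℕ × ℕ → ℝ := fun I => if 2 ≤ I.1 + I.2 then 0 else f I
  have hlow : ∀ I ∉ ({(0, 0), (1, 0), (0, 1)} : Finset (ℕ × ℕ)), low I = 0 := by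
    rintro ⟨i, j⟩ hI
    simp only [Finset.mem_insert, Finset.mem_singleton, Prod.mk.injEq, not_or] at hI
    simp only [low, ite_eq_left_iff]
    omega
  have hhigh : ∀ I, f I - low I = if 2 ≤ I.1 + I.2 then f I else 0 := fun I => by
    simp only [low]; split_ifs <;> ring
  calc ∑' I, f I = ∑' I, low I + (∑' I, f I - ∑' I, low I) := by ring
    _ = _ := by
      rw [← hf.tsum_sub (summable_of_ne_finset_zero hlow), tsum_eq_sum hlow]
      simp [low, hhigh, add_assoc]

theorem majorant_comp_swap (c : ℕ × ℕ → ℝ) (r : ℝ) :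
    majorant (c ∘ Prod.swap) r = majorant c r := by
  rw [majorant, ← (Equiv.prodComm ℕ ℕ).tsum_eq]
  simp [majorant, add_comm]

theorem series_comp_swap (c : ℕ × ℕ → ℝ) :
    series c ∘ Prod.swap = series (c ∘ Prod.swap) := by
  funext X
  rw [Function.comp_apply, series, ← (Equiv.prodComm ℕ ℕ).tsum_eq]
  simp [series, mul_right_comm]

theorem isEntire_of_summable_abs {c : ℕ × ℕ → ℝ}
    (h : ∀ X : ℝ × ℝ, Summable fun I : ℕ × ℕ => |c I * X.1 ^ I.1 * X.2 ^ I.2|) :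
    IsEntire c := fun r hr =>
  (h (r, r)).congr fun I => by
    rw [abs_mul, abs_mul, abs_pow, abs_pow, abs_of_nonneg hr, pow_add, mul_assoc]

theorem isEntire_affineCoeff (a b₁ b₂ : ℝ) : IsEntire (affineCoeff a b₁ b₂) := fun _ _ =>
  summable_of_ne_finset_zero (s := {(0, 0), (1, 0), (0, 1)}) fun I hI => by
    simp only [Finset.mem_insert, Finset.mem_singleton, not_or] at hI
    simp [affineCoeff, hI.1, hI.2.1, hI.2.2]

namespace IsEntire

variable {c : ℕ × ℕ → ℝ}

theorem summable_abs (hc : IsEntire c) (X : ℝ × ℝ) :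
    Summable fun I : ℕ × ℕ => |c I * X.1 ^ I.1 * X.2 ^ I.2| :=
  .of_nonneg_of_le (fun _ => abs_nonneg _)
    (fun I => abs_term_le c I (le_max_left _ _) (le_max_right _ _))
    (hc _ ((abs_nonneg _).trans (le_max_left _ _)))

theorem summable (hc : IsEntire c) (X : ℝ × ℝ) :
    Summable fun I : ℕ × ℕ => c I * X.1 ^ I.1 * X.2 ^ I.2 :=
  (hc.summable_abs X).of_abs

theorem abs_series_le (hc : IsEntire c) {X : ℝ × ℝ} {r : ℝ}
    (h₁ : |X.1| ≤ r) (h₂ : |X.2| ≤ r) : |series c X| ≤ majorant c r := by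
  have hs := hc.summable_abs X
  calc |series c X| ≤ ∑' I : ℕ × ℕ, |c I * X.1 ^ I.1 * X.2 ^ I.2| := by
        simpa only [Real.norm_eq_abs, series] using
          norm_tsum_le_tsum_norm (f := fun I : ℕ × ℕ => c I * X.1 ^ I.1 * X.2 ^ I.2) hs
    _ ≤ majorant c r :=
        hs.tsum_le_tsum (fun I => abs_term_le c I h₁ h₂) (hc r ((abs_nonneg _).trans h₁))

theorem sub {d : ℕ × ℕ → ℝ} (hc : IsEntire c) (hd : IsEntire d) : IsEntire (c - d) :=
  fun r hr => .of_nonneg_of_le (fun _ => by positivity)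
    (fun I => by rw [← add_mul]; gcongr; exact abs_sub _ _) ((hc r hr).add (hd r hr))

theorem series_sub {d : ℕ × ℕ → ℝ} (hc : IsEntire c) (hd : IsEntire d) (X : ℝ × ℝ) :
    series (c - d) X = series c X - series d X := by
  rw [series, series, series, ← (hc.summable X).tsum_sub (hd.summable X)]
  exact tsum_congr fun I => by simp only [Pi.sub_apply]; ring

theorem comp_swap (hc : IsEntire c) : IsEntire (c ∘ Prod.swap) := fun r hr =>
  ((Equiv.prodComm ℕ ℕ).summable_iff.2 (hc r hr)).congr fun I => by
    simp [add_comm]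

theorem rescale (hc : IsEntire c) {s : ℝ} (hs : 0 ≤ s) : IsEntire (rescale c s) := fun r hr =>
  (hc (s * r) (by positivity)).congr fun I => by
    rw [Bivariate.rescale, abs_mul, abs_of_nonneg (by positivity : 0 ≤ s ^ (I.1 + I.2)), mul_pow,
      mul_assoc]

theorem derivCoeff₁ (hc : IsEntire c) : IsEntire (derivCoeff₁ c) := fun r hr =>
  .of_nonneg_of_le (fun _ => by positivity) (abs_derivCoeff₁_mul_pow_le c hr)
    ((hc (r + 1) (by linarith)).comp_injective injective_succ_fst)

theorem derivCoeff₂ (hc : IsEntire c) : IsEntire (derivCoeff₂ c) :=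
  hc.comp_swap.derivCoeff₁.comp_swap

theorem majorant_derivCoeff₁_le (hc : IsEntire c) {r : ℝ} (hr : 0 ≤ r) :
    majorant (Bivariate.derivCoeff₁ c) r ≤ majorant c (r + 1) :=
  Summable.tsum_le_tsum_of_inj _ injective_succ_fst (fun _ _ => by positivity)
    (abs_derivCoeff₁_mul_pow_le c hr) (hc.derivCoeff₁ r hr) (hc (r + 1) (by linarith))

theorem majorant_derivCoeff₂_le (hc : IsEntire c) {r : ℝ} (hr : 0 ≤ r) :
    majorant (Bivariate.derivCoeff₂ c) r ≤ majorant c (r + 1) := by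
  rw [derivCoeff₂_eq_swap, majorant_comp_swap, ← majorant_comp_swap c]
  exact hc.comp_swap.majorant_derivCoeff₁_le hr

theorem iterate_derivCoeff₁ (hc : IsEntire c) (n : ℕ) :
    IsEntire (Bivariate.derivCoeff₁^[n] c) := by
  induction n with
  | zero => exact hc
  | succ n ih => rw [Function.iterate_succ_apply']; exact ih.derivCoeff₁

theorem iterate_derivCoeff₂ (hc : IsEntire c) (n : ℕ) :
    IsEntire (Bivariate.derivCoeff₂^[n] c) := by
  induction n with
  | zero => exact hc
  | succ n ih => rw [Function.iterate_succ_apply']; exact ih.derivCoeff₂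

theorem iteratedDerivCoeff (hc : IsEntire c) (i₁ i₂ : ℕ) :
    IsEntire (Bivariate.iteratedDerivCoeff i₁ i₂ c) :=
  (hc.iterate_derivCoeff₂ i₂).iterate_derivCoeff₁ i₁

theorem majorant_iterate_derivCoeff₁_le (hc : IsEntire c) {r : ℝ} (hr : 0 ≤ r) (n : ℕ) :
    majorant (Bivariate.derivCoeff₁^[n] c) r ≤ majorant c (r + n) := by
  induction n generalizing r with
  | zero => simp
  | succ n ih =>
    rw [Function.iterate_succ_apply', Nat.cast_succ, add_comm (n : ℝ), ← add_assoc]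
    exact ((hc.iterate_derivCoeff₁ n).majorant_derivCoeff₁_le hr).trans (ih (by linarith))

theorem majorant_iterate_derivCoeff₂_le (hc : IsEntire c) {r : ℝ} (hr : 0 ≤ r) (n : ℕ) :
    majorant (Bivariate.derivCoeff₂^[n] c) r ≤ majorant c (r + n) := by
  induction n generalizing r with
  | zero => simp
  | succ n ih =>
    rw [Function.iterate_succ_apply', Nat.cast_succ, add_comm (n : ℝ), ← add_assoc]
    exact ((hc.iterate_derivCoeff₂ n).majorant_derivCoeff₂_le hr).trans (ih (by linarith))

theorem majorant_iteratedDerivCoeff_le (hc : IsEntire c) {r : ℝ} (hr : 0 ≤ r) (i₁ i₂ : ℕ) :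
    majorant (Bivariate.iteratedDerivCoeff i₁ i₂ c) r ≤ majorant c (r + i₁ + i₂) :=
  ((hc.iterate_derivCoeff₂ i₂).majorant_iterate_derivCoeff₁_le hr i₁).trans
    (hc.majorant_iterate_derivCoeff₂_le (by positivity) i₂)

theorem hasDerivAt_series_fst (hc : IsEntire c) (X : ℝ × ℝ) :
    HasDerivAt (fun t => series c (t, X.2)) (series (Bivariate.derivCoeff₁ c) X) X.1 := by
  set m := |X.1| + |X.2| + 1
  have hX₂ : |X.2| ≤ m := by have := abs_nonneg X.1; linarith
  have hX₁ : X.1 ∈ Metric.ball (0 : ℝ) m := by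
    rw [mem_ball_zero_iff, Real.norm_eq_abs]; have := abs_nonneg X.2; linarith
  have hderiv : ∀ (I : ℕ × ℕ), ∀ t ∈ Metric.ball (0 : ℝ) m, HasDerivAt
      (fun t => c I * t ^ I.1 * X.2 ^ I.2) (c I * ((I.1 : ℝ) * t ^ (I.1 - 1)) * X.2 ^ I.2) t :=
    fun I t _ => ((hasDerivAt_pow I.1 t).const_mul (c I)).mul_const (X.2 ^ I.2)
  have hbound : ∀ (I : ℕ × ℕ), ∀ t ∈ Metric.ball (0 : ℝ) m,
      ‖c I * ((I.1 : ℝ) * t ^ (I.1 - 1)) * X.2 ^ I.2‖ ≤ |c I| * (m + 1) ^ (I.1 + I.2) := by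
    intro I t ht
    rw [mem_ball_zero_iff, Real.norm_eq_abs] at ht
    have hm : 0 ≤ m := (abs_nonneg _).trans hX₂
    have h₁ : (I.1 : ℝ) * |t| ^ (I.1 - 1) ≤ (m + 1) ^ I.1 :=
      (by gcongr : (I.1 : ℝ) * |t| ^ (I.1 - 1) ≤ I.1 * m ^ (I.1 - 1)).trans
        (natCast_mul_pow_pred_le hm I.1)
    have h₂ : |X.2| ^ I.2 ≤ (m + 1) ^ I.2 := by gcongr; linarith
    rw [Real.norm_eq_abs, abs_mul, abs_mul, abs_mul, abs_pow, abs_pow, Nat.abs_cast, pow_add,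
      mul_assoc]
    gcongr
  have hsum := hasDerivAt_tsum_of_isPreconnected (hc (m + 1) (by positivity)) Metric.isOpen_ball
    (convex_ball (0 : ℝ) m).isPreconnected hderiv hbound hX₁ (hc.summable (X.1, X.2)) hX₁
  suffices series (Bivariate.derivCoeff₁ c) X =
      ∑' I : ℕ × ℕ, c I * ((I.1 : ℝ) * X.1 ^ (I.1 - 1)) * X.2 ^ I.2 by rw [this]; exact hsum
  rw [series, ← injective_succ_fst.tsum_eq (f := fun I : ℕ × ℕ =>
    c I * ((I.1 : ℝ) * X.1 ^ (I.1 - 1)) * X.2 ^ I.2)]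
  · refine tsum_congr fun I => ?_
    simp only [Bivariate.derivCoeff₁, AddMonoidHom.mk'_apply, Nat.add_sub_cancel, Nat.cast_add,
      Nat.cast_one]
    ring
  · rintro ⟨_ | a, b⟩ hI
    · simp at hI
    · exact ⟨(a, b), rfl⟩

end IsEntire

theorem pd1R_series {c : ℕ × ℕ → ℝ} (hc : IsEntire c) :
    pd1R (series c) = series (derivCoeff₁ c) :=
  funext fun X => (hc.hasDerivAt_series_fst X).deriv

theorem pd2R_series {c : ℕ × ℕ → ℝ} (hc : IsEntire c) :
    pd2R (series c) = series (derivCoeff₂ c) := by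
  change pd1R (series c ∘ Prod.swap) ∘ Prod.swap = _
  rw [series_comp_swap, pd1R_series hc.comp_swap, series_comp_swap, derivCoeff₂_eq_swap]

theorem iterate_pd1R_series {c : ℕ × ℕ → ℝ} (hc : IsEntire c) (n : ℕ) :
    pd1R^[n] (series c) = series (derivCoeff₁^[n] c) := by
  induction n with
  | zero => rfl
  | succ n ih =>
    rw [Function.iterate_succ_apply', Function.iterate_succ_apply', ih,
      pd1R_series (hc.iterate_derivCoeff₁ n)]

theorem iterate_pd2R_series {c : ℕ × ℕ → ℝ} (hc : IsEntire c) (n : ℕ) :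
    pd2R^[n] (series c) = series (derivCoeff₂^[n] c) := by
  induction n with
  | zero => rfl
  | succ n ih =>
    rw [Function.iterate_succ_apply', Function.iterate_succ_apply', ih,
      pd2R_series (hc.iterate_derivCoeff₂ n)]

theorem DIR_series {c : ℕ × ℕ → ℝ} (hc : IsEntire c) (i₁ i₂ : ℕ) :
    DIR i₁ i₂ (series c) = series (iteratedDerivCoeff i₁ i₂ c) := by
  rw [DIR, iterate_pd2R_series hc, iterate_pd1R_series (hc.iterate_derivCoeff₂ i₂),
    iteratedDerivCoeff]

theorem abs_DIR_series_sub_le {c d : ℕ × ℕ → ℝ} (hc : IsEntire c) (hd : IsEntire d)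
    (i₁ i₂ : ℕ) {X : ℝ × ℝ} {r : ℝ} (hr : 0 ≤ r) (h₁ : |X.1| ≤ r) (h₂ : |X.2| ≤ r) :
    |DIR i₁ i₂ (series c) X - DIR i₁ i₂ (series d) X| ≤ majorant (c - d) (r + i₁ + i₂) := by
  rw [DIR_series hc, DIR_series hd, ← ((hc.iteratedDerivCoeff i₁ i₂).series_sub
    (hd.iteratedDerivCoeff i₁ i₂)), ← iteratedDerivCoeff_sub]
  exact (((hc.sub hd).iteratedDerivCoeff i₁ i₂).abs_series_le h₁ h₂).trans
    ((hc.sub hd).majorant_iteratedDerivCoeff_le hr i₁ i₂)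

theorem tendstoUniformlyOn_DIR_series {ι : Type*} {l : Filter ι} {c : ι → ℕ × ℕ → ℝ}
    {d : ℕ × ℕ → ℝ} (hc : ∀ᶠ k in l, IsEntire (c k)) (hd : IsEntire d)
    (hlim : ∀ r, 0 ≤ r → Tendsto (fun k => majorant (c k - d) r) l (𝓝 0))
    (i₁ i₂ : ℕ) {K : Set (ℝ × ℝ)} (hK : IsCompact K) :
    TendstoUniformlyOn (fun k => DIR i₁ i₂ (series (c k))) (DIR i₁ i₂ (series d)) l K := by
  obtain ⟨r, hr, hKr⟩ := hK.isBounded.subset_closedBall_lt 0 0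
  rw [Metric.tendstoUniformlyOn_iff]
  intro δ hδ
  filter_upwards [hc, (hlim (r + i₁ + i₂) (by positivity)).eventually (gt_mem_nhds hδ)]
    with k hck hk X hX
  have hX : ‖X‖ ≤ r := mem_closedBall_zero_iff.1 (hKr hX)
  rw [Real.dist_eq, abs_sub_comm]
  exact (abs_DIR_series_sub_le hck hd i₁ i₂ hr.le ((norm_fst_le X).trans hX)
    ((norm_snd_le X).trans hX)).trans_lt hk

theorem apply_smul_eq_series_rescale {f : ℝ × ℝ → ℝ} {c : ℕ × ℕ → ℝ}
    (hf : ∀ X : ℝ × ℝ, HasSum (fun I : ℕ × ℕ => c I * X.1 ^ I.1 * X.2 ^ I.2) (f X))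
    (s : ℝ) (X : ℝ × ℝ) : f (s • X) = series (rescale c s) X := by
  rw [← (hf (s • X)).tsum_eq, series]
  exact tsum_congr fun I => by
    simp only [rescale, Prod.smul_fst, Prod.smul_snd, smul_eq_mul]
    ring

theorem coeff_zero_eq_of_hasSum {c : ℕ × ℕ → ℝ} {a : ℝ}
    (h : HasSum (fun I : ℕ × ℕ => c I * (0 : ℝ) ^ I.1 * (0 : ℝ) ^ I.2) a) : c (0, 0) = a := by
  have hsingle := hasSum_single (f := fun I : ℕ × ℕ => c I * (0 : ℝ) ^ I.1 * (0 : ℝ) ^ I.2)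
    (0, 0) fun I hI => by rcases I with ⟨_ | _, _ | _⟩ <;> simp_all
  simpa using hsingle.unique h

theorem series_affineCoeff (a b₁ b₂ : ℝ) :
    series (affineCoeff a b₁ b₂) = fun X => a + b₁ * X.1 + b₂ * X.2 := by
  funext X
  have hhigh : ∀ I : ℕ × ℕ, (if 2 ≤ I.1 + I.2 then
      affineCoeff a b₁ b₂ I * X.1 ^ I.1 * X.2 ^ I.2 else 0) = 0 := fun I => by
    split_ifs with hI
    · rw [affineCoeff_of_two_le a b₁ b₂ hI, zero_mul, zero_mul]
    · rfl
  rw [series, tsum_eq_add_tsum_two_le ((isEntire_affineCoeff a b₁ b₂).summable X)]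
  simp only [hhigh, tsum_zero, add_zero]
  simp [affineCoeff]

theorem majorant_rescale_sub_affineCoeff_le {c : ℕ × ℕ → ℝ} {b₁ b₂ κ ε r : ℝ}
    (hc : IsEntire c) (hκ : 0 < κ) (hr : 0 ≤ r) (hrκ : r ≤ κ ^ ε) :
    majorant (rescale c (κ ^ 2)⁻¹ - affineCoeff (c (0, 0)) b₁ b₂) r ≤
      (|c (1, 0) * (κ ^ 2)⁻¹ - b₁| + |c (0, 1) * (κ ^ 2)⁻¹ - b₂|) * r +
        ∑' I : ℕ × ℕ, if 2 ≤ I.1 + I.2 then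
          |c I| * κ ^ ((-2 + ε) * ((I.1 + I.2 : ℕ) : ℝ)) else 0 := by
  set e := rescale c (κ ^ 2)⁻¹ - affineCoeff (c (0, 0)) b₁ b₂ with he_def
  have he : IsEntire e := (hc.rescale (by positivity)).sub (isEntire_affineCoeff _ b₁ b₂)
  have e₀₀ : e (0, 0) = 0 := by simp [e, rescale, affineCoeff]
  have e₁₀ : e (1, 0) = c (1, 0) * (κ ^ 2)⁻¹ - b₁ := by simp [e, rescale, affineCoeff]
  have e₀₁ : e (0, 1) = c (0, 1) * (κ ^ 2)⁻¹ - b₂ := by simp [e, rescale, affineCoeff]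
  have hhigh : ∀ I : ℕ × ℕ, (if 2 ≤ I.1 + I.2 then |e I| * r ^ (I.1 + I.2) else 0) ≤
      if 2 ≤ I.1 + I.2 then |c I| * κ ^ ((-2 + ε) * ((I.1 + I.2 : ℕ) : ℝ)) else 0 := by
    intro I
    split_ifs with hI
    · rw [he_def, Pi.sub_apply, affineCoeff_of_two_le _ b₁ b₂ hI, sub_zero,
        Real.rpow_mul_natCast hκ.le]
      exact abs_rescale_mul_pow_le c (by positivity) hr (inv_sq_mul_le_rpow hκ hrκ) I
    · rfl
  have htail : Summable fun I : ℕ × ℕ => if 2 ≤ I.1 + I.2 then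
      |c I| * κ ^ ((-2 + ε) * ((I.1 + I.2 : ℕ) : ℝ)) else 0 :=
    (summable_ite_of_nonneg (hc _ (by positivity : 0 ≤ κ ^ (-2 + ε))) (fun I => by positivity)
      fun I : ℕ × ℕ => 2 ≤ I.1 + I.2).congr fun I => by rw [Real.rpow_mul_natCast hκ.le]
  rw [majorant, tsum_eq_add_tsum_two_le (he r hr), e₀₀, e₁₀, e₀₁, abs_zero, zero_mul, zero_add,
    add_mul, zero_add, add_zero, pow_one]
  exact add_le_add_right (Summable.tsum_le_tsum hhigh (summable_ite_of_nonneg (he r hr)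
    (fun I => by positivity) fun I : ℕ × ℕ => 2 ≤ I.1 + I.2) htail) _

theorem tendsto_majorant_rescale_sub_affineCoeff {C : ℕ → ℕ × ℕ → ℝ} {c₀ C₁ C₂ ε r : ℝ}
    (hC : ∀ k : ℕ, 1 ≤ k → IsEntire (C k)) (hconst : ∀ k : ℕ, 1 ≤ k → C k (0, 0) = c₀)
    (hC₁ : Tendsto (fun k : ℕ => C k (1, 0) * ((k : ℝ) ^ 2)⁻¹) atTop (𝓝 C₁))
    (hC₂ : Tendsto (fun k : ℕ => C k (0, 1) * ((k : ℝ) ^ 2)⁻¹) atTop (𝓝 C₂))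
    (hε : 0 < ε) (htail : Tendsto (fun k : ℕ =>
        ∑' I : ℕ × ℕ, if 2 ≤ I.1 + I.2 then
          |C k I| * (k : ℝ) ^ ((-2 + ε) * ((I.1 + I.2 : ℕ) : ℝ)) else 0) atTop (𝓝 0))
    (hr : 0 ≤ r) :
    Tendsto (fun k : ℕ => majorant (rescale (C k) ((k : ℝ) ^ 2)⁻¹ - affineCoeff c₀ C₁ C₂) r)
      atTop (𝓝 0) := by
  have hbound := (((hC₁.sub_const C₁).abs.add (hC₂.sub_const C₂).abs).mul_const r).add htail
  simp only [sub_self, abs_zero, add_zero, zero_mul] at hbound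
  refine tendsto_of_tendsto_of_tendsto_of_le_of_le' tendsto_const_nhds hbound
    (.of_forall fun k => tsum_nonneg fun I => by positivity) ?_
  filter_upwards [eventually_ge_atTop 1,
    ((tendsto_rpow_atTop hε).comp tendsto_natCast_atTop_atTop).eventually_ge_atTop r]
    with k hk hrk
  rw [← hconst k hk]
  exact majorant_rescale_sub_affineCoeff_le (hC k hk) (by exact_mod_cast hk) hr hrk

end Bivariate

open Bivariate

/-- **Convergence Lemma.** If `(F_k)_{k≥1}` is a quadratic growth family, then the
rescaled functions `G_k(X) = F_k(k⁻²X)` converge in the `C^∞` topology to the affine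
function `G(x₁,x₂) = F₁(0,0) + C₁·x₁ + C₂·x₂`: every partial derivative of `G_k`
converges, uniformly on each compact subset of `ℝ²`, to the corresponding partial
derivative of `G`. -/
theorem convergence_lemma
    (F : ℕ → ℝ × ℝ → ℝ) (C : ℕ → ℕ × ℕ → ℝ)
    (hconv : ∀ k : ℕ, 1 ≤ k → ∀ X : ℝ × ℝ,
      HasSum (fun I : ℕ × ℕ => C k I * X.1 ^ I.1 * X.2 ^ I.2) (F k X))
    (habs : ∀ k : ℕ, 1 ≤ k → ∀ X : ℝ × ℝ,
      Summable (fun I : ℕ × ℕ => |C k I * X.1 ^ I.1 * X.2 ^ I.2|))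
    (hconst : ∀ k : ℕ, 1 ≤ k → C k (0, 0) = C 1 (0, 0))
    (C₁ C₂ : ℝ)
    (hC₁ : Tendsto (fun k : ℕ => C k (1, 0) * ((k : ℝ) ^ 2)⁻¹) atTop (nhds C₁))
    (hC₂ : Tendsto (fun k : ℕ => C k (0, 1) * ((k : ℝ) ^ 2)⁻¹) atTop (nhds C₂))
    (hε : ∃ ε : ℝ, 0 < ε ∧ Tendsto (fun k : ℕ =>
        ∑' I : ℕ × ℕ, if 2 ≤ I.1 + I.2 then
          |C k I| * (k : ℝ) ^ ((-2 + ε) * ((I.1 + I.2 : ℕ) : ℝ)) else 0)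
      atTop (nhds 0))
    (G : ℕ → ℝ × ℝ → ℝ)
    (hG : ∀ (k : ℕ) (X : ℝ × ℝ), G k X = F k ((((k : ℝ) ^ 2)⁻¹) • X)) :
    ∀ (i₁ i₂ : ℕ) (K : Set (ℝ × ℝ)), IsCompact K →
      TendstoUniformlyOn (fun k => DIR i₁ i₂ (G k))
        (DIR i₁ i₂ (fun X => F 1 (0, 0) + C₁ * X.1 + C₂ * X.2)) atTop K := by
  obtain ⟨ε, hε, htail⟩ := hε
  intro i₁ i₂ K hK
  have hC : ∀ k : ℕ, 1 ≤ k → IsEntire (C k) := fun k hk => isEntire_of_summable_abs (habs k hk)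
  have hC₀ : ∀ k : ℕ, 1 ≤ k → C k (0, 0) = F 1 (0, 0) := fun k hk =>
    (hconst k hk).trans (coeff_zero_eq_of_hasSum (hconv 1 le_rfl (0, 0)))
  have hGk : ∀ k : ℕ, 1 ≤ k → G k = series (rescale (C k) ((k : ℝ) ^ 2)⁻¹) := fun k hk =>
    funext fun X => (hG k X).trans (apply_smul_eq_series_rescale (hconv k hk) _ X)
  rw [← series_affineCoeff]
  refine (tendstoUniformlyOn_DIR_series
    ((eventually_ge_atTop 1).mono fun k hk => (hC k hk).rescale (by positivity))
    (isEntire_affineCoeff _ _ _)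
    (fun r hr => tendsto_majorant_rescale_sub_affineCoeff hC hC₀ hC₁ hC₂ hε htail hr)
    i₁ i₂ hK).congr ?_
  filter_upwards [eventually_ge_atTop 1] with k hk
  rw [hGk k hk]
  exact Set.eqOn_refl _ _

end
end

section
/- Under the stated hypotheses (in particular P#(X₀), Q#(X₀) and δ all real), the sequence (F_k(0,0))_{k≥0} is constant: F_k(0,0) = F₀(0,0) for all k. -/
open Complex Real Filter

noncomputable section

lemma trigSum_add (A B : ℤ × ℤ → ℤ) (hA : (Function.support A).Finite)
    (hB : (Function.support B).Finite) (X : ℝ × ℝ) :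
    trigSum (fun V => A V + B V) X = trigSum A X + trigSum B X := by
  unfold trigSum
  rw [← finsum_add_distrib]
  · apply finsum_congr; intro V; push_cast; ring
  · exact hA.subset (fun V hV => by
      simp only [Function.mem_support] at hV ⊢
      intro h; apply hV; simp [h])
  · exact hB.subset (fun V hV => by
      simp only [Function.mem_support] at hV ⊢
      intro h; apply hV; simp [h])

lemma trigSum_shift (R : ℤ × ℤ → ℤ)
    (M₁ M₂ : ℤ) (c : ℤ) (X : ℝ × ℝ)
    (hX : ∃ m : ℤ, X.1 * (M₁ : ℝ) + X.2 * (M₂ : ℝ) = 2 * Real.pi * (m : ℝ)) :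
    trigSum (fun V => R (V.1 - c * M₁, V.2 - c * M₂)) X = trigSum R X := by
  obtain ⟨m, hm⟩ := hX
  unfold trigSum
  have := finsum_comp_equiv (M := ℂ) (Equiv.addRight ((c * M₁, c * M₂) : ℤ × ℤ))
    (f := fun V : ℤ × ℤ => (R (V.1 - c * M₁, V.2 - c * M₂) : ℂ) *
      Complex.exp (Complex.I * ((X.1 * (V.1 : ℝ) + X.2 * (V.2 : ℝ) : ℝ) : ℂ)))
  rw [← this]
  apply finsum_congr; intro W
  simp only [Equiv.coe_addRight, Prod.fst_add, Prod.snd_add, add_sub_cancel_right]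
  congr 1
  have harg : (X.1 * ((W.1 + c * M₁ : ℤ) : ℝ) + X.2 * ((W.2 + c * M₂ : ℤ) : ℝ)) =
      (X.1 * (W.1 : ℝ) + X.2 * (W.2 : ℝ)) + (c : ℝ) * (2 * Real.pi * (m : ℝ)) := by
    rw [← hm]; push_cast; ring
  rw [harg]
  push_cast
  rw [mul_add, Complex.exp_add]
  have h1 : Complex.I * ((c : ℂ) * (2 * (Real.pi : ℂ) * (m : ℂ))) =
      ((c * m : ℤ) : ℂ) * (2 * (Real.pi : ℂ) * Complex.I) := by push_cast; ring
  rw [h1, Complex.exp_int_mul_two_pi_mul_I, mul_one]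

lemma shift_supp_fin (R : ℤ × ℤ → ℤ) (hR : (Function.support R).Finite) (c₁ c₂ : ℤ) :
    (Function.support (fun V : ℤ × ℤ => R (V.1 - c₁, V.2 - c₂))).Finite := by
  have : (fun V : ℤ × ℤ => R (V.1 - c₁, V.2 - c₂)) =
      R ∘ (fun V : ℤ × ℤ => (V.1 - c₁, V.2 - c₂)) := rfl
  rw [this, Function.support_comp_eq_preimage]
  exact hR.preimage (fun x _ y _ h => by
    simp only [Prod.ext_iff] at h ⊢
    omega)

lemma trigSum_linear (M₁ M₂ : ℤ) (X₀ : ℝ × ℝ)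
    (hX₀ : ∃ m : ℤ, X₀.1 * (M₁ : ℝ) + X₀.2 * (M₂ : ℝ) = 2 * Real.pi * (m : ℝ))
    (Rhat : ℕ → ℤ × ℤ → ℤ) (Rsharp : ℤ × ℤ → ℤ)
    (hRfin : ∀ k, (Function.support (Rhat k)).Finite)
    (hRsfin : (Function.support Rsharp).Finite)
    (hgrowth : LinearGrowth M₁ M₂ Rhat Rsharp) (k : ℕ) :
    trigSum (Rhat k) X₀ = trigSum (Rhat 0) X₀ + (k : ℂ) * trigSum Rsharp X₀ := by
  induction k with
  | zero => simp
  | succ n ih =>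
    have h1 : trigSum (Rhat (n + 1)) X₀ = trigSum (Rhat n) X₀ +
        trigSum (fun V : ℤ × ℤ => Rsharp (V.1 - (n : ℤ) * M₁, V.2 - (n : ℤ) * M₂)) X₀ := by
      rw [show Rhat (n + 1) = fun V : ℤ × ℤ =>
        Rhat n V + Rsharp (V.1 - (n : ℤ) * M₁, V.2 - (n : ℤ) * M₂) from funext (hgrowth n)]
      exact trigSum_add _ _ (hRfin n) (shift_supp_fin Rsharp hRsfin _ _) X₀
    rw [h1, trigSum_shift Rsharp M₁ M₂ (n : ℤ) X₀ hX₀, ih]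
    push_cast; ring


/-- Under the hypotheses of the Quadratic Rescaling Theorem (in particular
`P#(X₀)`, `Q#(X₀)` and `δ` all real), the sequence `(F_k(0,0))` is constant. -/
theorem F_at_origin_constant
    (M₁ M₂ : ℤ) (X₀ : ℝ × ℝ)
    (hX₀ : ∃ m : ℤ, X₀.1 * (M₁ : ℝ) + X₀.2 * (M₂ : ℝ) = 2 * Real.pi * (m : ℝ))
    (Phat Qhat : ℕ → ℤ × ℤ → ℤ) (Psharp Qsharp : ℤ × ℤ → ℤ)
    (hPfin : ∀ k, (Function.support (Phat k)).Finite)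
    (hQfin : ∀ k, (Function.support (Qhat k)).Finite)
    (hPsfin : (Function.support Psharp).Finite)
    (hQsfin : (Function.support Qsharp).Finite)
    (hPgrowth : LinearGrowth M₁ M₂ Phat Psharp)
    (hQgrowth : LinearGrowth M₁ M₂ Qhat Qsharp)
    (F : ℕ → ℝ × ℝ → ℝ)
    (hF : ∀ (k : ℕ) (X : ℝ × ℝ),
      F k X = (trigSum (Phat k) (X₀ + X) * (starRingEnd ℂ) (trigSum (Qhat k) (X₀ + X))).im)
    (δ : ℂ)
    (hδ : δ = trigSum Psharp X₀ * trigSum (Qhat 0) X₀ - trigSum (Phat 0) X₀ * trigSum Qsharp X₀)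
    (hPreal : (trigSum Psharp X₀).im = 0)
    (hQreal : (trigSum Qsharp X₀).im = 0)
    (hδreal : δ.im = 0) :
    ∀ k : ℕ, F k (0, 0) = F 0 (0, 0) := by
  intro k
  have h0 : X₀ + ((0, 0) : ℝ × ℝ) = X₀ := by
    ext <;> simp
  rw [hF k, hF 0, h0]
  rw [trigSum_linear M₁ M₂ X₀ hX₀ Phat Psharp hPfin hPsfin hPgrowth k,
      trigSum_linear M₁ M₂ X₀ hX₀ Qhat Qsharp hQfin hQsfin hQgrowth k]
  set p := trigSum (Phat 0) X₀
  set q := trigSum (Qhat 0) X₀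
  set a := trigSum Psharp X₀
  set b := trigSum Qsharp X₀
  rw [hδ] at hδreal
  simp only [map_add, map_mul, Complex.add_im, Complex.mul_im, Complex.add_re,
    Complex.mul_re, Complex.conj_re, Complex.conj_im, Complex.natCast_re,
    Complex.natCast_im, Complex.sub_im, Complex.mul_im, hPreal, hQreal] at hδreal ⊢
  ring_nf
  ring_nf at hδreal
  nlinarith [hδreal]


end
end

section
/- Under the stated hypotheses (in particular P#(X₀), Q#(X₀) and δ all real), for every multi-index I with |I| = 2 there exists a constant C such that for all k ≥ 1, | D_I F_k(0,0) | ≤ C·k³. -/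
/-!
Unrolling the linear growth and using `X₀·M ∈ 2πℤ` gives
`P_k(X₀ + X) = P₀(X₀ + X) + E_k(X) P#(X₀ + X)` with `E_k(X) = Σ_{j<k} exp(i j X·M)`, and likewise
for `Q_k`. The `n`-th derivative of `E_k` is `O(k^(1+n))`, so by the Leibniz rule every term of
`F_k = Im(P_k conj Q_k)` has second derivatives `O(k³)`, except `|E_k|² Im(P# conj Q#)`: there the
`O(k⁴)` second derivatives of `|E_k|²` are multiplied by `Im(P#(X₀) conj Q#(X₀)) = 0`.
-/

open Complex Real Filter

noncomputable section

open scoped ContDiff ComplexConjugate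
open Asymptotics

section PartialDerivatives

variable {f : ℝ × ℝ → ℝ}

theorem pd1R_eq_fderiv {x : ℝ × ℝ} (hf : DifferentiableAt ℝ f x) :
    pd1R f x = fderiv ℝ f x (1, 0) :=
  (hf.hasFDerivAt.comp_hasDerivAt x.1
    ((hasDerivAt_id x.1).prodMk (hasDerivAt_const x.1 x.2))).deriv

theorem pd2R_eq_fderiv {x : ℝ × ℝ} (hf : DifferentiableAt ℝ f x) :
    pd2R f x = fderiv ℝ f x (0, 1) :=
  (hf.hasFDerivAt.comp_hasDerivAt x.2
    ((hasDerivAt_const x.2 x.1).prodMk (hasDerivAt_id x.2))).deriv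

theorem differentiable_iteratedFDeriv_apply (hf : ContDiff ℝ ∞ f) {n : ℕ}
    (w : Fin n → ℝ × ℝ) : Differentiable ℝ fun y => iteratedFDeriv ℝ n f y w := by
  have hD := hf.differentiable_iteratedFDeriv (m := n) (mod_cast ENat.natCast_lt_top n)
  exact hD.continuousMultilinear_apply_const w

theorem fderiv_iteratedFDeriv_apply (hf : ContDiff ℝ ∞ f) {n : ℕ} (w : Fin n → ℝ × ℝ)
    (x u : ℝ × ℝ) :
    fderiv ℝ (fun y => iteratedFDeriv ℝ n f y w) x u =
      iteratedFDeriv ℝ (n + 1) f x (Fin.cons u w) := by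
  rw [iteratedFDeriv_succ_apply_left, fderiv_continuousMultilinear_apply_const_apply]
  · simp
  · exact (hf.differentiable_iteratedFDeriv (mod_cast ENat.natCast_lt_top n)) x

def IsUnitIteratedDeriv (f : ℝ × ℝ → ℝ) (n : ℕ) (g : ℝ × ℝ → ℝ) : Prop :=
  ∃ w : Fin n → ℝ × ℝ, (∀ j, ‖w j‖ ≤ 1) ∧ g = fun y => iteratedFDeriv ℝ n f y w

namespace IsUnitIteratedDeriv

theorem self : IsUnitIteratedDeriv f 0 f :=
  ⟨Fin.elim0, fun j => j.elim0, by simp⟩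

theorem norm_le {n : ℕ} {g : ℝ × ℝ → ℝ} (hg : IsUnitIteratedDeriv f n g) (x : ℝ × ℝ) :
    ‖g x‖ ≤ ‖iteratedFDeriv ℝ n f x‖ := by
  obtain ⟨w, hw, rfl⟩ := hg
  calc ‖iteratedFDeriv ℝ n f x w‖ ≤ ‖iteratedFDeriv ℝ n f x‖ * ∏ j, ‖w j‖ :=
        (iteratedFDeriv ℝ n f x).le_opNorm w
    _ ≤ ‖iteratedFDeriv ℝ n f x‖ :=
        mul_le_of_le_one_right (norm_nonneg _)
          (Finset.prod_le_one (fun _ _ => norm_nonneg _) fun j _ => hw j)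

theorem cons (hf : ContDiff ℝ ∞ f) {n : ℕ} {g : ℝ × ℝ → ℝ} (hg : IsUnitIteratedDeriv f n g)
    {u : ℝ × ℝ} (hu : ‖u‖ ≤ 1) :
    IsUnitIteratedDeriv f (n + 1) fun y => fderiv ℝ g y u := by
  obtain ⟨w, hw, rfl⟩ := hg
  exact ⟨Fin.cons u w, Fin.cases hu hw, funext fun y => fderiv_iteratedFDeriv_apply hf w y u⟩

theorem differentiable (hf : ContDiff ℝ ∞ f) {n : ℕ} {g : ℝ × ℝ → ℝ}
    (hg : IsUnitIteratedDeriv f n g) : Differentiable ℝ g := by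
  obtain ⟨w, -, rfl⟩ := hg
  exact differentiable_iteratedFDeriv_apply hf w

theorem iterate_pd1R (hf : ContDiff ℝ ∞ f) {n : ℕ} {g : ℝ × ℝ → ℝ}
    (hg : IsUnitIteratedDeriv f n g) (m : ℕ) : IsUnitIteratedDeriv f (n + m) (pd1R^[m] g) := by
  induction m with
  | zero => exact hg
  | succ m ih =>
    rw [Function.iterate_succ_apply', ← add_assoc]
    convert ih.cons hf (u := (1, 0)) (by simp) using 1
    funext y
    exact pd1R_eq_fderiv (ih.differentiable hf y)

theorem iterate_pd2R (hf : ContDiff ℝ ∞ f) {n : ℕ} {g : ℝ × ℝ → ℝ}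
    (hg : IsUnitIteratedDeriv f n g) (m : ℕ) : IsUnitIteratedDeriv f (n + m) (pd2R^[m] g) := by
  induction m with
  | zero => exact hg
  | succ m ih =>
    rw [Function.iterate_succ_apply', ← add_assoc]
    convert ih.cons hf (u := (0, 1)) (by simp) using 1
    funext y
    exact pd2R_eq_fderiv (ih.differentiable hf y)

end IsUnitIteratedDeriv

theorem abs_DIR_le (hf : ContDiff ℝ ∞ f) (i₁ i₂ : ℕ) (x : ℝ × ℝ) :
    |DIR i₁ i₂ f x| ≤ ‖iteratedFDeriv ℝ (i₁ + i₂) f x‖ := by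
  have h := ((IsUnitIteratedDeriv.self.iterate_pd2R hf i₂).iterate_pd1R hf i₁).norm_le x
  rwa [zero_add, add_comm] at h

end PartialDerivatives

theorem isBigO_natCast_zpow_of_le {a b : ℤ} (hab : a ≤ b) :
    (fun k : ℕ => (k : ℝ) ^ a) =O[𝓟 (Set.Ici 1)] fun k => (k : ℝ) ^ b := by
  refine isBigO_principal.2 ⟨1, fun k (hk : 1 ≤ k) => ?_⟩
  have hk' : (1 : ℝ) ≤ k := mod_cast hk
  rw [one_mul, Real.norm_of_nonneg (by positivity), Real.norm_of_nonneg (by positivity)]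
  exact zpow_le_zpow_right₀ hk' hab

theorem isBigO_const_natCast_zpow {F : Type*} [Norm F] (c : F) {b : ℤ} (hb : 0 ≤ b) :
    (fun _ : ℕ => c) =O[𝓟 (Set.Ici 1)] fun k => (k : ℝ) ^ b := by
  have h1 : (fun _ : ℕ => (1 : ℝ)) =O[𝓟 (Set.Ici 1)] fun k : ℕ => (k : ℝ) ^ b := by
    simpa using isBigO_natCast_zpow_of_le hb
  exact (isBigO_const_one ℝ c _).trans h1

section DerivGrowth

variable {E F G 𝔸 : Type*} [NormedAddCommGroup E] [NormedSpace ℝ E]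
  [NormedAddCommGroup F] [NormedSpace ℝ F] [NormedAddCommGroup G] [NormedSpace ℝ G]
  [NormedRing 𝔸] [NormedAlgebra ℝ 𝔸]

/-- Think of `f k` as oscillating at frequency `k` with amplitude `k ^ a`. Only `k ≥ 1` counts,
since `(0 : ℝ) ^ a` is a junk value for `a < 0`. -/
def HasDerivGrowth (f : ℕ → E → F) (x : E) (a : ℤ) : Prop :=
  (∀ k, ContDiff ℝ ∞ (f k)) ∧ ∀ n : ℕ,
    (fun k => iteratedFDeriv ℝ n (f k) x) =O[𝓟 (Set.Ici 1)] fun k => (k : ℝ) ^ (a + n)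

namespace HasDerivGrowth

variable {f g : ℕ → E → F} {x : E} {a b : ℤ}

theorem mono (hf : HasDerivGrowth f x a) (hab : a ≤ b) : HasDerivGrowth f x b :=
  ⟨hf.1, fun n => (hf.2 n).trans (isBigO_natCast_zpow_of_le (by omega))⟩

theorem add (hf : HasDerivGrowth f x a) (hg : HasDerivGrowth g x a) :
    HasDerivGrowth (fun k y => f k y + g k y) x a := by
  refine ⟨fun k => (hf.1 k).add (hg.1 k), fun n => ?_⟩
  have hn : (n : ℕ∞ω) ≤ ∞ := mod_cast le_top
  refine ((hf.2 n).add (hg.2 n)).congr' (Eventually.of_forall fun k => ?_) EventuallyEq.rfl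
  exact (fun_iteratedFDeriv_add_apply ((hf.1 k).of_le hn).contDiffAt
    ((hg.1 k).of_le hn).contDiffAt).symm

theorem map (hf : HasDerivGrowth f x a) (L : F →L[ℝ] G) :
    HasDerivGrowth (fun k y => L (f k y)) x a := by
  refine ⟨fun k => L.contDiff.comp (hf.1 k), fun n => ?_⟩
  refine (isBigO_of_le' (c := ‖L‖) _ fun k => ?_).trans (hf.2 n)
  exact L.norm_iteratedFDeriv_comp_left (hf.1 k).contDiffAt (mod_cast le_top)

theorem mul {f g : ℕ → E → 𝔸} (hf : HasDerivGrowth f x a) (hg : HasDerivGrowth g x b) :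
    HasDerivGrowth (fun k y => f k y * g k y) x (a + b) := by
  refine ⟨fun k => (hf.1 k).mul (hg.1 k), fun n => ?_⟩
  have leibniz : ∀ k, ‖iteratedFDeriv ℝ n (fun y => f k y * g k y) x‖ ≤
      ‖∑ i ∈ Finset.range (n + 1), (n.choose i : ℝ) * ‖iteratedFDeriv ℝ i (f k) x‖ *
        ‖iteratedFDeriv ℝ (n - i) (g k) x‖‖ := fun k =>
    (norm_iteratedFDeriv_mul_le (hf.1 k) (hg.1 k) x (mod_cast le_top)).trans
      (Real.le_norm_self _)
  refine (isBigO_of_le _ leibniz).trans (IsBigO.fun_sum fun i hi => ?_)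
  have hin : i ≤ n := Nat.lt_succ_iff.1 (Finset.mem_range.1 hi)
  refine (((hf.2 i).norm_left.const_mul_left _).mul (hg.2 (n - i)).norm_left).congr'
    EventuallyEq.rfl (eventuallyEq_principal.2 fun k (hk : 1 ≤ k) => ?_)
  have hk : (k : ℝ) ≠ 0 := mod_cast (Nat.one_le_iff_ne_zero.1 hk)
  rw [← zpow_add₀ hk, Nat.cast_sub hin]
  ring_nf

theorem const {g : E → F} (hg : ContDiff ℝ ∞ g) : HasDerivGrowth (fun _ => g) x 0 :=
  ⟨fun _ => hg, fun n => isBigO_const_natCast_zpow _ (by positivity)⟩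

theorem const_of_eq_zero {g : E → F} (hg : ContDiff ℝ ∞ g) (hgx : g x = 0) :
    HasDerivGrowth (fun _ => g) x (-1) := by
  refine ⟨fun _ => hg, fun n => ?_⟩
  cases n with
  | zero =>
    have h0 : iteratedFDeriv ℝ 0 g x = 0 := by
      rw [← norm_eq_zero, norm_iteratedFDeriv_zero, hgx, norm_zero]
    simp only [h0]
    exact isBigO_zero _ _
  | succ n => exact isBigO_const_natCast_zpow _ (by omega)

theorem exists_bound (hf : HasDerivGrowth f x a) (n : ℕ) :
    ∃ C, ∀ k : ℕ, 1 ≤ k → ‖iteratedFDeriv ℝ n (f k) x‖ ≤ C * (k : ℝ) ^ (a + n) := by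
  obtain ⟨C, hC⟩ := isBigO_principal.1 (hf.2 n)
  refine ⟨C, fun k hk => (hC k hk).trans_eq ?_⟩
  rw [Real.norm_of_nonneg (by positivity)]

end HasDerivGrowth

end DerivGrowth

theorem norm_iteratedFDeriv_real_cexp (n : ℕ) (z : ℂ) :
    ‖iteratedFDeriv ℝ n cexp z‖ = ‖cexp z‖ := by
  rw [← (Complex.contDiff_exp (𝕜 := ℂ)).contDiffAt.restrictScalars_iteratedFDeriv (𝕜 := ℝ),
    Function.comp_apply, ContinuousMultilinearMap.norm_restrictScalars,
    norm_iteratedFDeriv_eq_norm_iteratedDeriv, iteratedDeriv_eq_iterate, Complex.iter_deriv_exp]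

section Characters

def expChar (V : ℤ × ℤ) (X : ℝ × ℝ) : ℂ :=
  cexp (I * ((X.1 * (V.1 : ℝ) + X.2 * (V.2 : ℝ) : ℝ) : ℂ))

def phase (V : ℤ × ℤ) : ℝ × ℝ →L[ℝ] ℂ :=
  I • (ofRealCLM ∘L ((V.1 : ℝ) • ContinuousLinearMap.fst ℝ ℝ ℝ +
    (V.2 : ℝ) • ContinuousLinearMap.snd ℝ ℝ ℝ))

theorem expChar_eq_cexp_comp (V : ℤ × ℤ) : expChar V = cexp ∘ phase V := by
  ext X
  simp [expChar, phase, mul_comm, mul_add]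

theorem phase_intCast_mul (j : ℤ) (V : ℤ × ℤ) :
    phase (j * V.1, j * V.2) = (j : ℝ) • phase V := by
  ext <;> simp [phase] <;> ring

theorem expChar_add (V W : ℤ × ℤ) (X : ℝ × ℝ) :
    expChar (V + W) X = expChar V X * expChar W X := by
  simp only [expChar, ← Complex.exp_add, Prod.fst_add, Prod.snd_add]
  push_cast
  ring_nf

theorem expChar_add_right (V : ℤ × ℤ) (X Y : ℝ × ℝ) :
    expChar V (X + Y) = expChar V X * expChar V Y := by
  simp only [expChar, ← Complex.exp_add, Prod.fst_add, Prod.snd_add]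
  push_cast
  ring_nf

theorem expChar_intCast_mul_eq_one {M₁ M₂ : ℤ} {X₀ : ℝ × ℝ}
    (hX₀ : ∃ m : ℤ, X₀.1 * (M₁ : ℝ) + X₀.2 * (M₂ : ℝ) = 2 * Real.pi * (m : ℝ)) (j : ℤ) :
    expChar (j * M₁, j * M₂) X₀ = 1 := by
  obtain ⟨m, hm⟩ := hX₀
  rw [expChar, Complex.exp_eq_one_iff]
  refine ⟨j * m, ?_⟩
  have : X₀.1 * ((j * M₁ : ℤ) : ℝ) + X₀.2 * ((j * M₂ : ℤ) : ℝ) = j * (2 * Real.pi * m) := by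
    push_cast
    linear_combination (j : ℝ) * hm
  rw [this]
  push_cast
  ring

theorem contDiff_expChar (V : ℤ × ℤ) : ContDiff ℝ ∞ (expChar V) := by
  rw [expChar_eq_cexp_comp]
  exact (Complex.contDiff_exp (𝕜 := ℝ)).comp (phase V).contDiff

theorem norm_iteratedFDeriv_expChar_le (V : ℤ × ℤ) (n : ℕ) (X : ℝ × ℝ) :
    ‖iteratedFDeriv ℝ n (expChar V) X‖ ≤ ‖phase V‖ ^ n := by
  have hnorm : ‖cexp (phase V X)‖ = 1 := by
    rw [Complex.norm_exp]
    simp [phase]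
  rw [expChar_eq_cexp_comp, (phase V).iteratedFDeriv_comp_right
    (Complex.contDiff_exp (𝕜 := ℝ)) X (mod_cast le_top)]
  refine (ContinuousMultilinearMap.norm_compContinuousLinearMap_le _ _).trans_eq ?_
  rw [norm_iteratedFDeriv_real_cexp, hnorm, one_mul, Finset.prod_const, Finset.card_univ,
    Fintype.card_fin]

def charSum (M₁ M₂ : ℤ) (k : ℕ) (X : ℝ × ℝ) : ℂ :=
  ∑ j ∈ Finset.range k, expChar (j * M₁, j * M₂) X

theorem hasDerivGrowth_charSum (M₁ M₂ : ℤ) (x : ℝ × ℝ) :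
    HasDerivGrowth (charSum M₁ M₂) x 1 := by
  have hsmooth : ∀ k, ContDiff ℝ ∞ (charSum M₁ M₂ k) := fun k =>
    ContDiff.sum fun j _ => contDiff_expChar _
  refine ⟨hsmooth, fun n => isBigO_principal.2 ⟨‖phase (M₁, M₂)‖ ^ n, fun k (hk : 1 ≤ k) => ?_⟩⟩
  have hterm : ∀ j ∈ Finset.range k,
      ‖iteratedFDeriv ℝ n (expChar (j * M₁, j * M₂)) x‖ ≤ (k * ‖phase (M₁, M₂)‖) ^ n := by
    intro j hj
    refine (norm_iteratedFDeriv_expChar_le _ n x).trans (pow_le_pow_left₀ (norm_nonneg _) ?_ n)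
    rw [phase_intCast_mul j (M₁, M₂), norm_smul, Int.cast_natCast, Real.norm_natCast]
    gcongr
    exact (Finset.mem_range.1 hj).le
  unfold charSum
  rw [iteratedFDeriv_sum fun j _ => (contDiff_expChar _).of_le (mod_cast le_top),
    Finset.sum_apply]
  calc ‖∑ j ∈ Finset.range k, iteratedFDeriv ℝ n (expChar (j * M₁, j * M₂)) x‖
      ≤ ∑ j ∈ Finset.range k, ‖iteratedFDeriv ℝ n (expChar (j * M₁, j * M₂)) x‖ :=
        norm_sum_le _ _
    _ ≤ ∑ _j ∈ Finset.range k, (k * ‖phase (M₁, M₂)‖) ^ n := Finset.sum_le_sum hterm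
    _ = ‖phase (M₁, M₂)‖ ^ n * ‖(k : ℝ) ^ (1 + n : ℤ)‖ := by
        rw [Finset.sum_const, Finset.card_range, nsmul_eq_mul, Real.norm_of_nonneg (by positivity),
          show (1 + n : ℤ) = ((1 + n : ℕ) : ℤ) by push_cast; ring, zpow_natCast]
        ring

end Characters

section TrigSum

variable {A S : ℤ × ℤ → ℤ}

theorem trigSum_eq_finsum (A : ℤ × ℤ → ℤ) (X : ℝ × ℝ) :
    trigSum A X = ∑ᶠ V, (A V : ℂ) * expChar V X :=
  rfl

theorem finite_support_mul_expChar (hA : (Function.support A).Finite) (X : ℝ × ℝ) :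
    (Function.support fun V => (A V : ℂ) * expChar V X).Finite :=
  hA.subset fun V hV h => hV (by simp [h])

theorem trigSum_eq_sum (hA : (Function.support A).Finite) (X : ℝ × ℝ) :
    trigSum A X = ∑ V ∈ hA.toFinset, (A V : ℂ) * expChar V X :=
  finsum_eq_sum_of_support_subset (fun V => (A V : ℂ) * expChar V X) fun V hV =>
    hA.mem_toFinset.2 fun h => hV (by simp [h])

theorem contDiff_trigSum (hA : (Function.support A).Finite) : ContDiff ℝ ∞ (trigSum A) := by
  rw [funext (trigSum_eq_sum hA)]
  exact ContDiff.sum fun V _ => contDiff_const.mul (contDiff_expChar V)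

theorem finsum_shift_mul_expChar (S : ℤ × ℤ → ℤ) (a : ℤ × ℤ) (X : ℝ × ℝ) :
    ∑ᶠ V, (S (V - a) : ℂ) * expChar V X = expChar a X * trigSum S X := by
  rw [← finsum_comp_equiv (Equiv.addRight a), trigSum_eq_finsum, mul_finsum]
  refine finsum_congr fun W => ?_
  rw [Equiv.coe_addRight, add_sub_cancel_right, expChar_add]
  ring

theorem trigSum_succ {M₁ M₂ : ℤ} {A : ℕ → ℤ × ℤ → ℤ} (hg : LinearGrowth M₁ M₂ A S)
    {k : ℕ} (hAk : (Function.support (A k)).Finite) (hS : (Function.support S).Finite)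
    (X : ℝ × ℝ) :
    trigSum (A (k + 1)) X = trigSum (A k) X + expChar (k * M₁, k * M₂) X * trigSum S X := by
  have hsplit : ∀ V, (A (k + 1) V : ℂ) * expChar V X =
      (A k V : ℂ) * expChar V X + (S (V - (k * M₁, k * M₂)) : ℂ) * expChar V X := fun V => by
    rw [hg k V, Int.cast_add, add_mul]
    rfl
  have hshift := finsum_shift_mul_expChar S (k * M₁, k * M₂) X
  have hfin : (Function.support fun V => (S (V - (k * M₁, k * M₂)) : ℂ) * expChar V X).Finite :=
    (hS.preimage (Equiv.subRight ((k : ℤ) * M₁, (k : ℤ) * M₂)).injective.injOn).subset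
      fun V hV h => hV (by rw [Equiv.subRight_apply] at h; simp [h])
  rw [trigSum_eq_finsum, finsum_congr hsplit,
    finsum_add_distrib (finite_support_mul_expChar hAk X) hfin, hshift]
  rfl

theorem trigSum_eq_add_charSum {M₁ M₂ : ℤ} {X₀ : ℝ × ℝ}
    (hX₀ : ∃ m : ℤ, X₀.1 * (M₁ : ℝ) + X₀.2 * (M₂ : ℝ) = 2 * Real.pi * (m : ℝ))
    {A : ℕ → ℤ × ℤ → ℤ} (hg : LinearGrowth M₁ M₂ A S)
    (hA : ∀ k, (Function.support (A k)).Finite) (hS : (Function.support S).Finite) (k : ℕ)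
    (X : ℝ × ℝ) :
    trigSum (A k) (X₀ + X) = trigSum (A 0) (X₀ + X) + charSum M₁ M₂ k X * trigSum S (X₀ + X) := by
  induction k with
  | zero => simp [charSum]
  | succ k ih =>
    rw [trigSum_succ hg (hA k) hS, ih, expChar_add_right, expChar_intCast_mul_eq_one hX₀, charSum,
      charSum, Finset.sum_range_succ]
    ring

end TrigSum

theorem im_mul_conj_add_mul (a b c d z : ℂ) :
    ((a + z * b) * conj (c + z * d)).im =
      (a * conj c + z * (b * conj c) + conj z * (a * conj d)).im +
        (z * conj z).re * (b * conj d).im := by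
  simp only [map_add, map_mul, Complex.add_im, Complex.mul_im, Complex.mul_re, Complex.add_re,
    Complex.conj_re, Complex.conj_im]
  ring

theorem hasDerivGrowth_im_mul_conj {E : ℕ → ℝ × ℝ → ℂ} {x : ℝ × ℝ} (hE : HasDerivGrowth E x 1)
    {p₀ q₀ p q : ℝ × ℝ → ℂ} (hp₀ : ContDiff ℝ ∞ p₀) (hq₀ : ContDiff ℝ ∞ q₀)
    (hp : ContDiff ℝ ∞ p) (hq : ContDiff ℝ ∞ q) (hpq : (p x * conj (q x)).im = 0) :
    HasDerivGrowth (fun k X => ((p₀ X + E k X * p X) * conj (q₀ X + E k X * q X)).im) x 1 := by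
  have hconj {g : ℝ × ℝ → ℂ} (hg : ContDiff ℝ ∞ g) : ContDiff ℝ ∞ fun X => conj (g X) :=
    Complex.conjCLE.contDiff.comp hg
  have hEc : HasDerivGrowth (fun k X => conj (E k X)) x 1 :=
    hE.map (Complex.conjCLE : ℂ →L[ℝ] ℂ)
  have hlin : HasDerivGrowth (fun k X => (p₀ X * conj (q₀ X) + E k X * (p X * conj (q₀ X)) +
      conj (E k X) * (p₀ X * conj (q X))).im) x 1 :=
    ((((HasDerivGrowth.const (hp₀.mul (hconj hq₀))).mono zero_le_one).add
      (hE.mul (.const (hp.mul (hconj hq₀))))).add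
        (hEc.mul (.const (hp₀.mul (hconj hq))))).map Complex.imCLM
  have hquad : HasDerivGrowth (fun k X => (E k X * conj (E k X)).re * (p X * conj (q X)).im) x 1 :=
    ((hE.mul hEc).map Complex.reCLM).mul
      (.const_of_eq_zero (Complex.imCLM.contDiff.comp (hp.mul (hconj hq))) hpq)
  simpa only [im_mul_conj_add_mul] using hlin.add hquad

theorem second_order_DI_F_bound_general
    (M₁ M₂ : ℤ) (X₀ : ℝ × ℝ)
    (hX₀ : ∃ m : ℤ, X₀.1 * (M₁ : ℝ) + X₀.2 * (M₂ : ℝ) = 2 * Real.pi * (m : ℝ))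
    (Phat Qhat : ℕ → ℤ × ℤ → ℤ) (Psharp Qsharp : ℤ × ℤ → ℤ)
    (hPfin : ∀ k, (Function.support (Phat k)).Finite)
    (hQfin : ∀ k, (Function.support (Qhat k)).Finite)
    (hPsfin : (Function.support Psharp).Finite)
    (hQsfin : (Function.support Qsharp).Finite)
    (hPgrowth : LinearGrowth M₁ M₂ Phat Psharp)
    (hQgrowth : LinearGrowth M₁ M₂ Qhat Qsharp)
    (F : ℕ → ℝ × ℝ → ℝ)
    (hF : ∀ (k : ℕ) (X : ℝ × ℝ),
      F k X = (trigSum (Phat k) (X₀ + X) * (starRingEnd ℂ) (trigSum (Qhat k) (X₀ + X))).im)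
    (hPreal : (trigSum Psharp X₀).im = 0)
    (hQreal : (trigSum Qsharp X₀).im = 0) :
    ∀ i₁ i₂ : ℕ, i₁ + i₂ = 2 → ∃ C : ℝ, ∀ k : ℕ, 1 ≤ k →
      |DIR i₁ i₂ (F k) (0, 0)| ≤ C * (k : ℝ) ^ 3 := by
  intro i₁ i₂ hI
  have hsmooth {A : ℤ × ℤ → ℤ} (hA : (Function.support A).Finite) :
      ContDiff ℝ ∞ fun X => trigSum A (X₀ + X) :=
    (contDiff_trigSum hA).comp (contDiff_const.add contDiff_id)
  have hF' : F = fun k X =>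
      ((trigSum (Phat 0) (X₀ + X) + charSum M₁ M₂ k X * trigSum Psharp (X₀ + X)) *
        conj (trigSum (Qhat 0) (X₀ + X) + charSum M₁ M₂ k X * trigSum Qsharp (X₀ + X))).im := by
    ext k X
    rw [hF, trigSum_eq_add_charSum hX₀ hPgrowth hPfin hPsfin,
      trigSum_eq_add_charSum hX₀ hQgrowth hQfin hQsfin]
  have hgrowth := hasDerivGrowth_im_mul_conj (hasDerivGrowth_charSum M₁ M₂ 0)
    (hsmooth (hPfin 0)) (hsmooth (hQfin 0)) (hsmooth hPsfin) (hsmooth hQsfin)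
    (by simp [Complex.mul_im, hPreal, hQreal])
  rw [← hF'] at hgrowth
  obtain ⟨C, hC⟩ := hgrowth.exists_bound 2
  refine ⟨C, fun k hk => ?_⟩
  calc |DIR i₁ i₂ (F k) (0, 0)| ≤ ‖iteratedFDeriv ℝ 2 (F k) 0‖ :=
        hI ▸ abs_DIR_le (hgrowth.1 k) i₁ i₂ 0
    _ ≤ C * (k : ℝ) ^ 3 := by simpa using hC k hk

/-- For every multi-index `I` with `|I| = 2` there is a constant `C` with
`|D_I F_k(0,0)| ≤ C·k³` for all `k ≥ 1`. -/
theorem second_order_DI_F_bound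
    (M₁ M₂ : ℤ) (X₀ : ℝ × ℝ)
    (hX₀ : ∃ m : ℤ, X₀.1 * (M₁ : ℝ) + X₀.2 * (M₂ : ℝ) = 2 * Real.pi * (m : ℝ))
    (Phat Qhat : ℕ → ℤ × ℤ → ℤ) (Psharp Qsharp : ℤ × ℤ → ℤ)
    (hPfin : ∀ k, (Function.support (Phat k)).Finite)
    (hQfin : ∀ k, (Function.support (Qhat k)).Finite)
    (hPsfin : (Function.support Psharp).Finite)
    (hQsfin : (Function.support Qsharp).Finite)
    (hPgrowth : LinearGrowth M₁ M₂ Phat Psharp)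
    (hQgrowth : LinearGrowth M₁ M₂ Qhat Qsharp)
    (F : ℕ → ℝ × ℝ → ℝ)
    (hF : ∀ (k : ℕ) (X : ℝ × ℝ),
      F k X = (trigSum (Phat k) (X₀ + X) * (starRingEnd ℂ) (trigSum (Qhat k) (X₀ + X))).im)
    (δ : ℂ)
    (hδ : δ = trigSum Psharp X₀ * trigSum (Qhat 0) X₀ - trigSum (Phat 0) X₀ * trigSum Qsharp X₀)
    (hPreal : (trigSum Psharp X₀).im = 0)
    (hQreal : (trigSum Qsharp X₀).im = 0)
    (hδreal : δ.im = 0) :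
    ∀ i₁ i₂ : ℕ, i₁ + i₂ = 2 → ∃ C : ℝ, ∀ k : ℕ, 1 ≤ k →
      |DIR i₁ i₂ (F k) (0, 0)| ≤ C * (k : ℝ) ^ 3 :=
  second_order_DI_F_bound_general M₁ M₂ X₀ hX₀ Phat Qhat Psharp Qsharp hPfin hQfin hPsfin hQsfin
    hPgrowth hQgrowth F hF hPreal hQreal
end
end

section
/- Instability Proposition: For every automorphism w in Γ and each i ∈ {1, −1}, there exist odd integers r and s such that for every integer k with 1−n ≤ k ≤ n−1, the coefficient of γ_k* in the basis expansion of w(φ_i*) is congruent modulo 2n to r·(k+n) if k is odd, and to s·(k+n) if k is even. -/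
noncomputable section

/-- Index type for the basis `{β₁*, β₋₁*} ∪ {γ_k* : 1−n ≤ k ≤ n−1}`:
`Sum.inl true ↔ β₁*`, `Sum.inl false ↔ β₋₁*`, `Sum.inr ⟨k,_⟩ ↔ γ_k*`. -/
abbrev SIdx (n : ℤ) : Type := Bool ⊕ {k : ℤ // 1 - n ≤ k ∧ k ≤ n - 1}

/-- The free `ℤ`-module on the basis `{β₁*, β₋₁*} ∪ {γ_k* : 1−n ≤ k ≤ n−1}`. -/
abbrev SMod (n : ℤ) : Type := SIdx n →₀ ℤ

/-- `true ↦ 1`, `false ↦ −1`: the index `i ∈ {1,−1}` encoded by a Boolean. -/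
def sgn (b : Bool) : ℤ := if b then 1 else -1

/-- The basis element `β_i*` (with `i = 1` for `b = true` and `i = −1` for `b = false`). -/
def betaStar (n : ℤ) (b : Bool) : SMod n := Finsupp.single (Sum.inl b) 1

/-- The basis element `γ_k*` for `1−n ≤ k ≤ n−1`, and `0` otherwise (so in
particular `γ_n* = γ_{−n}* = 0`). -/
def gammaStar (n : ℤ) (k : ℤ) : SMod n :=
  if h : 1 - n ≤ k ∧ k ≤ n - 1 then Finsupp.single (Sum.inr ⟨k, h⟩) 1 else 0

/-- The `ℤ`-linear endomorphism `σ*`: `β_i* ↦ β_{−i}*`, `γ_k* ↦ γ_{−k}*`. -/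
def sigmaStar (n : ℤ) : SMod n →ₗ[ℤ] SMod n :=
  Finsupp.linearCombination ℤ
    (Sum.elim (fun b => betaStar n (!b)) (fun k : {k : ℤ // 1 - n ≤ k ∧ k ≤ n - 1} =>
      gammaStar n (-k.1)))

/-- The `ℤ`-linear endomorphism `τ_o*`: `β_i* ↦ β_i*`,
`γ_k* ↦ −γ_{k−1}* + γ_k* − γ_{k+1}*` for `k` odd and `γ_k* ↦ γ_k*` for `k` even. -/
def tauOStar (n : ℤ) : SMod n →ₗ[ℤ] SMod n :=
  Finsupp.linearCombination ℤ
    (Sum.elim (fun b => betaStar n b) (fun k : {k : ℤ // 1 - n ≤ k ∧ k ≤ n - 1} =>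
      if Odd k.1 then -gammaStar n (k.1 - 1) + gammaStar n k.1 - gammaStar n (k.1 + 1)
      else gammaStar n k.1))

/-- The `ℤ`-linear endomorphism `τ_e*`: `β_i* ↦ β_{−i}* + γ_i*`,
`γ_k* ↦ γ_k*` for `k` odd and `γ_k* ↦ −γ_{k−1}* + γ_k* − γ_{k+1}*` for `k` even. -/
def tauEStar (n : ℤ) : SMod n →ₗ[ℤ] SMod n :=
  Finsupp.linearCombination ℤ
    (Sum.elim (fun b => betaStar n (!b) + gammaStar n (sgn b))
      (fun k : {k : ℤ // 1 - n ≤ k ∧ k ≤ n - 1} =>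
        if Odd k.1 then gammaStar n k.1
        else -gammaStar n (k.1 - 1) + gammaStar n k.1 - gammaStar n (k.1 + 1)))

/-- `Γ`: the subgroup of the automorphism group of the module generated by the
automorphisms `σ*`, `τ_o*`, `τ_e*`. -/
def GammaGrp (n : ℤ) : Subgroup (SMod n ≃ₗ[ℤ] SMod n) :=
  Subgroup.closure {w : SMod n ≃ₗ[ℤ] SMod n |
    (w : SMod n →ₗ[ℤ] SMod n) = sigmaStar n ∨
    (w : SMod n →ₗ[ℤ] SMod n) = tauOStar n ∨
    (w : SMod n →ₗ[ℤ] SMod n) = tauEStar n}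

/-- `φ₁* = 2n·β₁* + Σ_{k=1−n}^{0} (k+n)·γ_k* − Σ_{k=1}^{n−1} (n−k)·γ_k*` and
`φ₋₁* = 2n·β₋₁* − Σ_{k=1−n}^{−1} (k+n)·γ_k* + n·γ₀* + Σ_{k=1}^{n−1} (n−k)·γ_k*`. -/
def phiStar (n : ℤ) (b : Bool) : SMod n :=
  if b then
    (2 * n) • betaStar n true
      + ∑ k ∈ Finset.Icc (1 - n) 0, (k + n) • gammaStar n k
      - ∑ k ∈ Finset.Icc 1 (n - 1), (n - k) • gammaStar n k
  else
    (2 * n) • betaStar n false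
      - ∑ k ∈ Finset.Icc (1 - n) (-1), (k + n) • gammaStar n k
      + n • gammaStar n 0
      + ∑ k ∈ Finset.Icc 1 (n - 1), (n - k) • gammaStar n k

/-!
Modulo `2n`, the γ-coefficient of `φ_i*` at `k` is `i (k + n)` and its β-coefficients vanish.
Say that `v` has odd slopes if its β-coefficients vanish mod `2n` and, for some odd `r, s`, its
γ-coefficient at `k` is `≡ r (k + n)` for odd `k` and `≡ s (k + n)` for even `k`; since
`k + n ≡ 0` at `k = ±n`, this is compatible with `γ_{±n}* = 0`. The reflection `σ*` sends
`(r, s)` to `(-r, -s)`, because `-k + n ≡ -(k + n)`. The twists `τ_o*`, `τ_e*` and their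
inverses change the γ-coefficient at `k` by a multiple of the sum of the coefficients at
`k ± 1`, which have the other parity, up to β-coefficients: they send `(r, s)` to `(r, s ∓ 2r)`
and `(r ∓ 2s, s)`. Hence having odd slopes is `Γ`-invariant.
-/

section

variable {n : ℤ}

def gammaCoeff (n k : ℤ) : SMod n →ₗ[ℤ] ℤ :=
  if h : 1 - n ≤ k ∧ k ≤ n - 1 then Finsupp.lapply (Sum.inr ⟨k, h⟩) else 0

lemma gammaCoeff_apply {k : ℤ} (hk : 1 - n ≤ k ∧ k ≤ n - 1) (v : SMod n) :
    gammaCoeff n k v = v (Sum.inr ⟨k, hk⟩) := by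
  simp [gammaCoeff, hk]

lemma gammaCoeff_eq_zero {k : ℤ} (hk : ¬(1 - n ≤ k ∧ k ≤ n - 1)) (v : SMod n) :
    gammaCoeff n k v = 0 := by
  rw [gammaCoeff, dif_neg hk, LinearMap.zero_apply]

lemma gammaCoeff_neg_self (v : SMod n) : gammaCoeff n (-n) v = 0 :=
  gammaCoeff_eq_zero (by omega) v

lemma gammaCoeff_self (v : SMod n) : gammaCoeff n n v = 0 :=
  gammaCoeff_eq_zero (by omega) v

@[simp]
lemma gammaCoeff_single_inl (k : ℤ) (c : Bool) (a : ℤ) :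
    gammaCoeff n k (Finsupp.single (Sum.inl c) a) = 0 := by
  unfold gammaCoeff; split_ifs <;> simp

@[simp]
lemma gammaCoeff_single_inr (k : ℤ) (j : {k : ℤ // 1 - n ≤ k ∧ k ≤ n - 1}) (a : ℤ) :
    gammaCoeff n k (Finsupp.single (Sum.inr j) a) = if j.1 = k then a else 0 := by
  unfold gammaCoeff
  split_ifs <;> simp [Finsupp.single_apply, Subtype.ext_iff] <;> grind

lemma gammaCoeff_gammaStar {k : ℤ} (hk : 1 - n ≤ k ∧ k ≤ n - 1) (j : ℤ) :
    gammaCoeff n k (gammaStar n j) = if j = k then 1 else 0 := by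
  unfold gammaStar
  split_ifs <;> simp_all

@[simp]
lemma gammaCoeff_betaStar (k : ℤ) (b : Bool) : gammaCoeff n k (betaStar n b) = 0 :=
  gammaCoeff_single_inl k b 1

@[simp]
lemma gammaStar_apply_inl (j : ℤ) (c : Bool) : gammaStar n j (Sum.inl c) = 0 := by
  unfold gammaStar; split_ifs <;> simp

@[simp]
lemma betaStar_apply_inl (b c : Bool) : betaStar n b (Sum.inl c) = if b = c then 1 else 0 := by
  simp [betaStar, Finsupp.single_apply]

lemma sigmaStar_apply_inl (v : SMod n) (c : Bool) : sigmaStar n v (Sum.inl c) = v (Sum.inl !c) := by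
  induction v using Finsupp.induction_linear with
  | zero => simp
  | add v w hv hw => simp only [map_add, Finsupp.add_apply, hv, hw]
  | single a b =>
    rcases a with c' | j <;> simp [sigmaStar, Finsupp.single_apply, Bool.eq_not_iff]

lemma tauOStar_apply_inl (v : SMod n) (c : Bool) : tauOStar n v (Sum.inl c) = v (Sum.inl c) := by
  induction v using Finsupp.induction_linear with
  | zero => simp
  | add v w hv hw => simp only [map_add, Finsupp.add_apply, hv, hw]
  | single a b =>
    rcases a with c' | j
    · simp [tauOStar, Finsupp.single_apply]
    · by_cases hj : Odd j.1 <;> simp [tauOStar, hj]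

lemma tauEStar_apply_inl (v : SMod n) (c : Bool) : tauEStar n v (Sum.inl c) = v (Sum.inl !c) := by
  induction v using Finsupp.induction_linear with
  | zero => simp
  | add v w hv hw => simp only [map_add, Finsupp.add_apply, hv, hw]
  | single a b =>
    rcases a with c' | j
    · simp [tauEStar, Finsupp.single_apply, Bool.eq_not_iff]
    · by_cases hj : Odd j.1 <;> simp [tauEStar, hj]

lemma gammaCoeff_sigmaStar (k : ℤ) (v : SMod n) :
    gammaCoeff n k (sigmaStar n v) = gammaCoeff n (-k) v := by
  induction v using Finsupp.induction_linear with
  | zero => simp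
  | add v w hv hw => simp only [map_add, hv, hw]
  | single a b =>
    rcases a with c | ⟨j, hj⟩
    · simp [sigmaStar]
    · by_cases hk : 1 - n ≤ k ∧ k ≤ n - 1
      · simp [sigmaStar, gammaCoeff_gammaStar hk]
        grind
      · rw [gammaCoeff_eq_zero hk, gammaCoeff_single_inr, if_neg (by simp; omega)]

lemma gammaCoeff_tauOStar {k : ℤ} (hk : 1 - n ≤ k ∧ k ≤ n - 1) (v : SMod n) :
    gammaCoeff n k (tauOStar n v) = gammaCoeff n k v
      + (if Odd k then 0 else -1) * (gammaCoeff n (k - 1) v + gammaCoeff n (k + 1) v) := by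
  induction v using Finsupp.induction_linear with
  | zero => simp
  | add v w hv hw => simp only [map_add, hv, hw]; ring
  | single a b =>
    rcases a with c | ⟨j, hj⟩
    · simp [tauOStar]
    · simp only [tauOStar, Finsupp.linearCombination_single, Sum.elim_inr, Int.odd_iff]
      split_ifs <;> simp [gammaCoeff_gammaStar hk] <;> split_ifs <;> omega

lemma gammaCoeff_tauEStar {k : ℤ} (hk : 1 - n ≤ k ∧ k ≤ n - 1) (v : SMod n) :
    gammaCoeff n k (tauEStar n v) = gammaCoeff n k v
      + (if Odd k then -1 else 0) * (gammaCoeff n (k - 1) v + gammaCoeff n (k + 1) v)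
      + ((if k = 1 then v (Sum.inl true) else 0) + (if k = -1 then v (Sum.inl false) else 0)) := by
  induction v using Finsupp.induction_linear with
  | zero => simp
  | add v w hv hw => simp only [map_add, Finsupp.add_apply, hv, hw]; split_ifs <;> ring
  | single a b =>
    rcases a with c | ⟨j, hj⟩
    · cases c <;> simp [tauEStar, gammaCoeff_gammaStar hk, sgn] <;> split_ifs <;> omega
    · simp only [tauEStar, Finsupp.linearCombination_single, Sum.elim_inr, Int.odd_iff]
      split_ifs <;> simp [gammaCoeff_gammaStar hk] <;> split_ifs <;> omega

lemma gammaCoeff_tauOStar_of_odd {k : ℤ} (hk : Odd k) (v : SMod n) :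
    gammaCoeff n k (tauOStar n v) = gammaCoeff n k v := by
  by_cases hk' : 1 - n ≤ k ∧ k ≤ n - 1
  · simp [gammaCoeff_tauOStar hk', hk]
  · simp [gammaCoeff_eq_zero hk']

lemma gammaCoeff_tauEStar_of_even {k : ℤ} (hk : Even k) (v : SMod n) :
    gammaCoeff n k (tauEStar n v) = gammaCoeff n k v := by
  by_cases hk' : 1 - n ≤ k ∧ k ≤ n - 1
  · have : k ≠ 1 ∧ k ≠ -1 := by constructor <;> rintro rfl <;> simp at hk
    simp [gammaCoeff_tauEStar hk', Int.not_odd_iff_even.mpr hk, this]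
  · simp [gammaCoeff_eq_zero hk']

lemma gammaCoeff_eq_tauOStar_add {k : ℤ} (hk : 1 - n ≤ k ∧ k ≤ n - 1) (v : SMod n) :
    gammaCoeff n k v = gammaCoeff n k (tauOStar n v) + (if Odd k then 0 else 1) *
      (gammaCoeff n (k - 1) (tauOStar n v) + gammaCoeff n (k + 1) (tauOStar n v)) := by
  by_cases hodd : Odd k
  · simp [gammaCoeff_tauOStar hk, hodd]
  · rw [gammaCoeff_tauOStar hk, gammaCoeff_tauOStar_of_odd (by simpa using hodd),
      gammaCoeff_tauOStar_of_odd (by simpa using hodd), if_neg hodd, if_neg hodd]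
    ring

lemma gammaCoeff_eq_tauEStar_add {k : ℤ} (hk : 1 - n ≤ k ∧ k ≤ n - 1) (v : SMod n) :
    gammaCoeff n k v = gammaCoeff n k (tauEStar n v) + (if Odd k then 1 else 0) *
      (gammaCoeff n (k - 1) (tauEStar n v) + gammaCoeff n (k + 1) (tauEStar n v))
      + -((if k = 1 then v (Sum.inl true) else 0) + (if k = -1 then v (Sum.inl false) else 0)) := by
  by_cases hodd : Odd k
  · rw [gammaCoeff_tauEStar hk, gammaCoeff_tauEStar_of_even (by simpa using hodd),
      gammaCoeff_tauEStar_of_even (by simpa using hodd), if_pos hodd, if_pos hodd]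
    ring
  · rw [gammaCoeff_tauEStar hk, if_neg hodd, if_neg hodd]
    ring

def OddSlopes (n : ℤ) (c : ℤ → ℤ) : Prop :=
  ∃ r s : ℤ, Odd r ∧ Odd s ∧
    ∀ k, -n ≤ k → k ≤ n → c k ≡ (if Odd k then r else s) * (k + n) [ZMOD 2 * n]

namespace OddSlopes

variable {c c' : ℤ → ℤ}

lemma of_interior {r s : ℤ} (hr : Odd r) (hs : Odd s) (hlo : c (-n) = 0) (hhi : c n = 0)
    (h : ∀ k, 1 - n ≤ k → k ≤ n - 1 →
      c k ≡ (if Odd k then r else s) * (k + n) [ZMOD 2 * n]) :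
    OddSlopes n c := by
  refine ⟨r, s, hr, hs, fun k hk₁ hk₂ => ?_⟩
  obtain hk | hk | hk := show k = -n ∨ k = n ∨ (1 - n ≤ k ∧ k ≤ n - 1) by omega
  · simp [hk, hlo]
  · rw [hk, hhi, Int.modEq_comm, Int.modEq_zero_iff_dvd]
    exact ⟨if Odd n then r else s, by ring⟩
  · exact h k hk.1 hk.2

lemma comp_neg (h : OddSlopes n c) : OddSlopes n (fun k => c (-k)) := by
  obtain ⟨r, s, hr, hs, hc⟩ := h
  refine ⟨-r, -s, hr.neg, hs.neg, fun k hk₁ hk₂ => ?_⟩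
  have hck := hc (-k) (by omega) (by omega)
  simp only [odd_neg] at hck
  refine hck.trans (Int.modEq_iff_dvd.2 ⟨-(if Odd k then r else s), ?_⟩)
  split_ifs <;> ring

lemma of_modEq_neighbors (h : OddSlopes n c) (a b : ℤ) (hlo : c' (-n) = 0) (hhi : c' n = 0)
    (hc' : ∀ k, 1 - n ≤ k → k ≤ n - 1 →
      c' k ≡ c k + (if Odd k then a else b) * (c (k - 1) + c (k + 1)) [ZMOD 2 * n]) :
    OddSlopes n c' := by
  obtain ⟨r, s, hr, hs, hc⟩ := h
  refine of_interior (hr.add_even (even_two_mul (a * s))) (hs.add_even (even_two_mul (b * r)))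
    hlo hhi fun k hk₁ hk₂ => ?_
  calc c' k ≡ c k + (if Odd k then a else b) * (c (k - 1) + c (k + 1)) [ZMOD 2 * n] :=
        hc' k hk₁ hk₂
    _ ≡ (if Odd k then r else s) * (k + n) + (if Odd k then a else b) *
          ((if Odd (k - 1) then r else s) * (k - 1 + n)
            + (if Odd (k + 1) then r else s) * (k + 1 + n)) [ZMOD 2 * n] := by
        gcongr <;> apply hc <;> omega
    _ = (if Odd k then r + 2 * (a * s) else s + 2 * (b * r)) * (k + n) := by
        simp only [odd_sub_one, odd_add_one, ← Int.not_odd_iff_even]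
        split_ifs <;> ring

end OddSlopes

def HasOddSlopes (n : ℤ) (v : SMod n) : Prop :=
  (∀ b, 2 * n ∣ v (Sum.inl b)) ∧ OddSlopes n (fun k => gammaCoeff n k v)

lemma hasOddSlopes_sigmaStar_iff (v : SMod n) :
    HasOddSlopes n (sigmaStar n v) ↔ HasOddSlopes n v := by
  simp only [HasOddSlopes, sigmaStar_apply_inl, gammaCoeff_sigmaStar]
  exact and_congr ⟨fun h b => by simpa using h (!b), fun h b => h (!b)⟩
    ⟨fun h => by simpa using h.comp_neg, OddSlopes.comp_neg⟩

lemma hasOddSlopes_tauOStar_iff (v : SMod n) :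
    HasOddSlopes n (tauOStar n v) ↔ HasOddSlopes n v := by
  simp only [HasOddSlopes, tauOStar_apply_inl]
  refine and_congr_right fun _ => ⟨fun h => ?_, fun h => ?_⟩
  · refine h.of_modEq_neighbors 0 1 (gammaCoeff_neg_self v) (gammaCoeff_self v)
      fun k hk₁ hk₂ => ?_
    rw [gammaCoeff_eq_tauOStar_add ⟨hk₁, hk₂⟩]
  · refine h.of_modEq_neighbors 0 (-1) (gammaCoeff_neg_self _) (gammaCoeff_self _)
      fun k hk₁ hk₂ => ?_
    rw [gammaCoeff_tauOStar ⟨hk₁, hk₂⟩]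

lemma hasOddSlopes_tauEStar_iff (v : SMod n) :
    HasOddSlopes n (tauEStar n v) ↔ HasOddSlopes n v := by
  have hβ : (∀ b, 2 * n ∣ tauEStar n v (Sum.inl b)) ↔ ∀ b, 2 * n ∣ v (Sum.inl b) := by
    simp only [tauEStar_apply_inl]
    exact ⟨fun h b => by simpa using h (!b), fun h b => h (!b)⟩
  rw [HasOddSlopes, HasOddSlopes, hβ]
  refine and_congr_right fun hv => ?_
  have hcorr (k : ℤ) : 2 * n ∣
      (if k = 1 then v (Sum.inl true) else 0) + (if k = -1 then v (Sum.inl false) else 0) :=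
    dvd_add (by split_ifs <;> simp [hv]) (by split_ifs <;> simp [hv])
  refine ⟨fun h => ?_, fun h => ?_⟩
  · refine h.of_modEq_neighbors 1 0 (gammaCoeff_neg_self v) (gammaCoeff_self v)
      fun k hk₁ hk₂ => ?_
    rw [gammaCoeff_eq_tauEStar_add ⟨hk₁, hk₂⟩]
    exact Int.add_modEq_left_iff.2 (dvd_neg.2 (hcorr k))
  · refine h.of_modEq_neighbors (-1) 0 (gammaCoeff_neg_self _) (gammaCoeff_self _)
      fun k hk₁ hk₂ => ?_
    rw [gammaCoeff_tauEStar ⟨hk₁, hk₂⟩]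
    exact Int.add_modEq_left_iff.2 (hcorr k)

lemma hasOddSlopes_apply_iff {w : SMod n ≃ₗ[ℤ] SMod n} (hw : w ∈ GammaGrp n) (v : SMod n) :
    HasOddSlopes n (w v) ↔ HasOddSlopes n v := by
  induction hw using Subgroup.closure_induction generalizing v with
  | mem g hg =>
    rw [← LinearEquiv.coe_coe]
    rcases hg with hg | hg | hg <;> rw [hg]
    exacts [hasOddSlopes_sigmaStar_iff v, hasOddSlopes_tauOStar_iff v, hasOddSlopes_tauEStar_iff v]
  | one => rfl
  | mul g h _ _ ihg ihh => exact (ihg (h v)).trans (ihh v)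
  | inv g _ ih => simpa using (ih (g⁻¹ v)).symm

lemma phiStar_apply_inl (b c : Bool) :
    phiStar n b (Sum.inl c) = if b = c then 2 * n else 0 := by
  cases b <;> cases c <;> simp [phiStar]

lemma gammaCoeff_phiStar {k : ℤ} (hk : 1 - n ≤ k ∧ k ≤ n - 1) (b : Bool) :
    gammaCoeff n k (phiStar n b) ≡ sgn b * (k + n) [ZMOD 2 * n] := by
  have hsum (s : Finset ℤ) (f : ℤ → ℤ) :
      gammaCoeff n k (∑ j ∈ s, f j • gammaStar n j) = if k ∈ s then f k else 0 := by
    simp [gammaCoeff_gammaStar hk]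
  -- the coefficients of `φ_b*` differ from `sgn b * (k + n)` by `0` or `±2n`
  rw [Int.modEq_iff_add_fac]
  cases b <;> simp [phiStar, hsum, gammaCoeff_gammaStar hk, sgn] <;> split_ifs <;>
    first | exact ⟨0, by omega⟩ | exact ⟨1, by omega⟩ | exact ⟨-1, by omega⟩

lemma hasOddSlopes_phiStar (b : Bool) : HasOddSlopes n (phiStar n b) := by
  have hsgn : Odd (sgn b) := by cases b <;> simp [sgn]
  refine ⟨fun c => ?_, .of_interior hsgn hsgn (gammaCoeff_neg_self _) (gammaCoeff_self _)
    fun k hk₁ hk₂ => by simpa using gammaCoeff_phiStar ⟨hk₁, hk₂⟩ b⟩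
  rw [phiStar_apply_inl]
  split_ifs <;> simp

end

theorem instability_proposition_general (n : ℤ)
    (w : SMod n ≃ₗ[ℤ] SMod n) (hw : w ∈ GammaGrp n) (b : Bool) :
    ∃ r s : ℤ, Odd r ∧ Odd s ∧
      ∀ (k : ℤ) (hk : 1 - n ≤ k ∧ k ≤ n - 1),
        (Odd k → (w (phiStar n b)) (Sum.inr ⟨k, hk⟩) ≡ r * (k + n) [ZMOD (2 * n)]) ∧
        (Even k → (w (phiStar n b)) (Sum.inr ⟨k, hk⟩) ≡ s * (k + n) [ZMOD (2 * n)]) := by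
  obtain ⟨-, r, s, hr, hs, hslopes⟩ := (hasOddSlopes_apply_iff hw _).2 (hasOddSlopes_phiStar b)
  refine ⟨r, s, hr, hs, fun k hk => ?_⟩
  have hk' := hslopes k (by omega) (by omega)
  simp only [gammaCoeff_apply hk] at hk'
  exact ⟨fun hodd => by simpa [hodd] using hk',
    fun heven => by simpa [Int.not_odd_iff_even.2 heven] using hk'⟩

/-- **Instability Proposition.** For every automorphism `w ∈ Γ` and each
`i ∈ {1,−1}`, there are odd integers `r, s` such that for every `k` with
`1−n ≤ k ≤ n−1`, the coefficient of `γ_k*` in `w(φ_i*)` is congruent mod `2n`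
to `r·(k+n)` if `k` is odd and to `s·(k+n)` if `k` is even. -/
theorem instability_proposition (n : ℤ) (hn : 2 ≤ n)
    (w : SMod n ≃ₗ[ℤ] SMod n) (hw : w ∈ GammaGrp n) (b : Bool) :
    ∃ r s : ℤ, Odd r ∧ Odd s ∧
      ∀ (k : ℤ) (hk : 1 - n ≤ k ∧ k ≤ n - 1),
        (Odd k → (w (phiStar n b)) (Sum.inr ⟨k, hk⟩) ≡ r * (k + n) [ZMOD (2 * n)]) ∧
        (Even k → (w (phiStar n b)) (Sum.inr ⟨k, hk⟩) ≡ s * (k + n) [ZMOD (2 * n)]) :=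
  instability_proposition_general n w hw b

end
end

section
/- For every integer n ≥ 2 and every real number x with π/(2n+2) < x < π/(2n+1), one has 0 < g(x) < f(x), where g(x) = (1/2)·(sin(2x) − sin(2nx)) and f(x) = (sin(x) − sin((2n+1)x)) / (2·cos(x)). -/
open Real

/-- For every integer `n ≥ 2` and `π/(2n+2) < x < π/(2n+1)`, one has
`0 < g(x) < f(x)`, where `g(x) = (sin 2x − sin 2nx)/2` and
`f(x) = (sin x − sin (2n+1)x)/(2 cos x)`. -/
theorem g_pos_and_g_lt_f (n : ℤ) (hn : 2 ≤ n) (x : ℝ)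
    (hx1 : Real.pi / (2 * (n : ℝ) + 2) < x) (hx2 : x < Real.pi / (2 * (n : ℝ) + 1)) :
    0 < (1 / 2) * (Real.sin (2 * x) - Real.sin (2 * (n : ℝ) * x)) ∧
    (1 / 2) * (Real.sin (2 * x) - Real.sin (2 * (n : ℝ) * x)) <
      (Real.sin x - Real.sin ((2 * (n : ℝ) + 1) * x)) / (2 * Real.cos x) := by
  set N : ℝ := (n : ℝ) with hNdef
  have hN : (2:ℝ) ≤ N := by rw [hNdef]; exact_mod_cast hn
  have hπ := Real.pi_pos
  have hd1 : (0:ℝ) < 2 * N + 2 := by linarith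
  have hd2 : (0:ℝ) < 2 * N + 1 := by linarith
  have hx0 : 0 < x := lt_trans (div_pos hπ hd1) hx1
  have h1 : Real.pi < (2 * N + 2) * x := by
    have := (div_lt_iff₀ hd1).mp hx1; linarith [this]
  have h2 : (2 * N + 1) * x < Real.pi := by
    have := (lt_div_iff₀ hd2).mp hx2; linarith [this]
  have hA : Real.pi / 2 < (N + 1) * x := by nlinarith
  have hB : (N + 1) * x < Real.pi := by nlinarith [mul_pos (show (0:ℝ) < N by linarith) hx0]
  have hc : Real.cos ((N + 1) * x) < 0 :=
    Real.cos_neg_of_pi_div_two_lt_of_lt hA (by linarith)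
  have hs1 : 0 < Real.sin ((N - 1) * x) := by
    apply Real.sin_pos_of_pos_of_lt_pi
    · nlinarith
    · nlinarith [mul_pos (show (0:ℝ) < N + 2 by linarith) hx0]
  have hs2 : 0 < Real.sin (N * x) := by
    apply Real.sin_pos_of_pos_of_lt_pi
    · nlinarith
    · nlinarith [mul_pos (show (0:ℝ) < N + 1 by linarith) hx0]
  have hc2 : 0 < Real.cos ((N - 1) * x) := by
    apply Real.cos_pos_of_mem_Ioo
    constructor
    · nlinarith
    · nlinarith
  have hsx : 0 < Real.sin x := by
    apply Real.sin_pos_of_pos_of_lt_pi hx0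
    nlinarith [mul_pos (show (0:ℝ) < 2 * N by linarith) hx0]
  have hcx : 0 < Real.cos x := by
    apply Real.cos_pos_of_mem_Ioo
    constructor
    · linarith
    · nlinarith [mul_pos (show (0:ℝ) < 2 * N by linarith) hx0]
  have e1 : Real.sin (2 * x) - Real.sin (2 * N * x)
      = -2 * Real.sin ((N - 1) * x) * Real.cos ((N + 1) * x) := by
    rw [Real.sin_sub_sin]
    have ha : (2 * x - 2 * N * x) / 2 = -((N - 1) * x) := by ring
    have hb : (2 * x + 2 * N * x) / 2 = (N + 1) * x := by ring
    rw [ha, hb, Real.sin_neg]; ring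
  have e2 : Real.sin x - Real.sin ((2 * N + 1) * x)
      = -2 * Real.sin (N * x) * Real.cos ((N + 1) * x) := by
    rw [Real.sin_sub_sin]
    have ha : (x - (2 * N + 1) * x) / 2 = -(N * x) := by ring
    have hb : (x + (2 * N + 1) * x) / 2 = (N + 1) * x := by ring
    rw [ha, hb, Real.sin_neg]; ring
  have e3 : Real.sin (N * x)
      = Real.sin ((N - 1) * x) * Real.cos x + Real.cos ((N - 1) * x) * Real.sin x := by
    have h : N * x = (N - 1) * x + x := by ring
    rw [h, Real.sin_add]
  constructor
  · rw [e1]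
    nlinarith [mul_pos hs1 (neg_pos.mpr hc)]
  · rw [e1, e2, lt_div_iff₀ (by linarith : (0:ℝ) < 2 * Real.cos x)]
    nlinarith [mul_pos (neg_pos.mpr hc) (mul_pos hc2 hsx)]
end

section
/- For every integer n ≥ 2, setting ω = exp(iπ/(2n)), the complex number z = 8ω + 4ω³ + 6ω⁻¹ + 2ω⁻³ satisfies 0 < arg(z) < π/(2n); that is, the direction of z lies strictly between 1 and ω on the unit circle. -/
open Complex Real

/-- For every integer `n ≥ 2`, with `ω = exp(iπ/(2n))`, the holonomy
`z = 8ω + 4ω³ + 6ω⁻¹ + 2ω⁻³` satisfies `0 < arg z < π/(2n)`: its direction lies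
strictly between `1` and `ω` on the unit circle. -/
theorem holonomy_arg_between (n : ℕ) (hn : 2 ≤ n)
    (ω : ℂ) (hω : ω = Complex.exp (Complex.I * (Real.pi / (2 * n))))
    (z : ℂ) (hz : z = 8 * ω + 4 * ω ^ 3 + 6 * ω ^ (-1 : ℤ) + 2 * ω ^ (-3 : ℤ)) :
    0 < z.arg ∧ z.arg < Real.pi / (2 * n) := by
  obtain ⟨θ, hθdef⟩ : ∃ t : ℝ, t = Real.pi / (2 * (n:ℝ)) := ⟨_, rfl⟩
  rw [← hθdef]
  have hn2 : (2 : ℝ) ≤ (n : ℝ) := by exact_mod_cast hn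
  have hθ0 : 0 < θ := by
    rw [hθdef]
    apply div_pos Real.pi_pos
    positivity
  have hθ4 : θ ≤ Real.pi / 4 := by
    rw [hθdef]
    apply div_le_div_of_nonneg_left Real.pi_pos.le (by norm_num) (by linarith)
  -- rewrite ω as exp(θ * I)
  have hθc : ((θ : ℝ) : ℂ) = ↑Real.pi / (2 * ↑n) := by
    rw [hθdef]; push_cast; ring
  have hω' : ω = Complex.exp ((θ : ℂ) * Complex.I) := by
    rw [hω, ← hθc, mul_comm]
  have h3 : ω ^ 3 = Complex.exp (((3 * θ : ℝ) : ℂ) * Complex.I) := by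
    rw [hω', ← Complex.exp_nat_mul]
    congr 1
    push_cast
    ring
  have hm1 : ω ^ (-1 : ℤ) = Complex.exp (((-θ : ℝ) : ℂ) * Complex.I) := by
    rw [zpow_neg_one, hω', ← Complex.exp_neg]
    congr 1
    push_cast
    ring
  have hm3 : ω ^ (-3 : ℤ) = Complex.exp (((-(3 * θ) : ℝ) : ℂ) * Complex.I) := by
    have : ω ^ (-3 : ℤ) = (ω ^ 3)⁻¹ := by
      rw [← zpow_natCast ω 3, ← zpow_neg]
      norm_num
    rw [this, h3, ← Complex.exp_neg]
    congr 1
    push_cast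
    ring
  have key : ∀ x : ℝ, Complex.exp ((x : ℂ) * Complex.I)
      = ((Real.cos x : ℂ) + (Real.sin x : ℂ) * Complex.I) := fun x => by
    rw [Complex.exp_mul_I, Complex.ofReal_cos, Complex.ofReal_sin]
  have hzeq : z = ((14 * Real.cos θ + 6 * Real.cos (3 * θ) : ℝ) : ℂ)
      + ((2 * Real.sin θ + 2 * Real.sin (3 * θ) : ℝ) : ℂ) * Complex.I := by
    rw [hz, h3, hm1, hm3, hω', key, key, key, key,
      Real.cos_neg, Real.sin_neg, Real.cos_neg, Real.sin_neg]
    push_cast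
    ring
  have hre : z.re = 14 * Real.cos θ + 6 * Real.cos (3 * θ) := by
    rw [hzeq]
    simp only [Complex.add_re, Complex.mul_I_re, Complex.ofReal_im, Complex.ofReal_re,
      neg_zero, add_zero]
  have him : z.im = 2 * Real.sin θ + 2 * Real.sin (3 * θ) := by
    rw [hzeq]
    simp only [Complex.add_im, Complex.mul_I_im, Complex.ofReal_im, Complex.ofReal_re,
      zero_add]
  -- basic trig bounds
  have hs : 0 < Real.sin θ := Real.sin_pos_of_pos_of_lt_pi hθ0 (by linarith [Real.pi_pos])
  have hcge : Real.cos (Real.pi / 4) ≤ Real.cos θ := by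
    apply Real.cos_le_cos_of_nonneg_of_le_pi hθ0.le (by linarith [Real.pi_pos]) hθ4
  have hc : (1 : ℝ) / 2 < Real.cos θ := by
    rw [Real.cos_pi_div_four] at hcge
    nlinarith [Real.sq_sqrt (by norm_num : (2:ℝ) ≥ 0), Real.sqrt_nonneg 2]
  have hc1 : Real.cos θ ≤ 1 := Real.cos_le_one θ
  have hsc : Real.sin θ ^ 2 + Real.cos θ ^ 2 = 1 := Real.sin_sq_add_cos_sq θ
  have h3s : Real.sin (3 * θ) = 3 * Real.sin θ - 4 * Real.sin θ ^ 3 :=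
    Real.sin_three_mul θ
  have h3c : Real.cos (3 * θ) = 4 * Real.cos θ ^ 3 - 3 * Real.cos θ :=
    Real.cos_three_mul θ
  have hs1 : Real.sin θ ≤ 1 := Real.sin_le_one θ
  have hrepos : 0 < z.re := by
    rw [hre, h3c]
    nlinarith
  have himpos : 0 < z.im := by
    rw [him, h3s]
    nlinarith
  -- arg z = arctan (im/re)
  have harg : z.arg = Real.arctan (z.im / z.re) := by
    have habs : |z.arg| < Real.pi / 2 := by
      rw [Complex.abs_arg_lt_pi_div_two_iff]
      exact Or.inl hrepos
    rw [← Complex.tan_arg]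
    rw [Real.arctan_tan (by linarith [abs_lt.mp habs |>.1]) (abs_lt.mp habs |>.2)]
  constructor
  · rw [harg]
    have : (0:ℝ) = Real.arctan 0 := Real.arctan_zero.symm
    rw [this]
    exact Real.arctan_strictMono (div_pos himpos hrepos)
  · rw [harg]
    have hθlt : θ < Real.pi / 2 := lt_of_le_of_lt hθ4 (by linarith [Real.pi_pos])
    have htan : θ = Real.arctan (Real.tan θ) :=
      (Real.arctan_tan (by linarith) hθlt).symm
    rw [htan]
    apply Real.arctan_strictMono
    rw [Real.tan_eq_sin_div_cos, div_lt_div_iff₀ hrepos (by linarith)]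
    rw [hre, him, h3s, h3c]
    have hcpos : 0 < Real.cos θ := by linarith
    have h4c : 0 < 4 * Real.cos θ ^ 2 - 1 := by nlinarith
    have hmul : (Real.sin θ ^ 2 + Real.cos θ ^ 2) * (Real.sin θ * Real.cos θ)
        = Real.sin θ * Real.cos θ := by rw [hsc, one_mul]
    nlinarith [mul_pos (mul_pos hs hcpos) h4c, hmul]
end

section
/- For every integer n ≥ 3, the planar region { (x,y) ∈ ℝ² : u₁(x,y) ≥ 0, u₂(x,y) ≥ 0, u₃(x,y) ≥ 0 and u₄(x,y) ≥ 0 } equals the convex hull of the four points P₁ = (−1/n, 1 − 1/n), P₂ = (1 − 1/n, −1/n), P₃ = (a, a), and P₄ = (μ·a, μ·a). -/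
set_option maxHeartbeats 1600000


open Real

private lemma combo3 {s : Set (ℝ × ℝ)} {A B C : ℝ × ℝ}
    (hA : A ∈ s) (hB : B ∈ s) (hC : C ∈ s)
    {α β γ : ℝ} (hα : 0 ≤ α) (hβ : 0 ≤ β) (hγ : 0 ≤ γ) (hsum : α + β + γ = 1) :
    α • A + β • B + γ • C ∈ convexHull ℝ s := by
  have h := (convex_convexHull ℝ s).sum_mem (t := (Finset.univ : Finset (Fin 3)))
    (w := ![α, β, γ]) (z := ![A, B, C])
    (by intro i _; fin_cases i <;> simpa using ‹_›)
    (by simp [Fin.sum_univ_three]; linarith)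
    (by intro i _; fin_cases i <;> exact subset_convexHull ℝ s ‹_›)
  simpa [Fin.sum_univ_three, add_assoc] using h

private theorem tile_alg (N σ μ : ℝ) (hN : 3 ≤ N) (hσ1 : 1 < σ)
    (hμ : μ * (1 + σ) = 1) :
    {p : ℝ × ℝ |
        0 ≤ 1 - ((N + 1) / (N - 1)) * p.1 - p.2 ∧
        0 ≤ -1 + ((1 + N + 2 * σ) / (N - 1)) * p.1 + (1 + 2 * σ) * p.2 ∧
        0 ≤ -1 + (1 + 2 * σ) * p.1 + ((1 + N + 2 * σ) / (N - 1)) * p.2 ∧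
        0 ≤ 1 - p.1 - ((N + 1) / (N - 1)) * p.2} =
      convexHull ℝ
        ({(-1 / N, 1 - 1 / N), (1 - 1 / N, -1 / N),
          ((1 / 2) * (1 - 1 / N), (1 / 2) * (1 - 1 / N)),
          (μ * ((1 / 2) * (1 - 1 / N)), μ * ((1 / 2) * (1 - 1 / N)))} : Set (ℝ × ℝ)) := by
  have hN1 : (0:ℝ) < N - 1 := by linarith
  have hN0 : (0:ℝ) < N := by linarith
  have hσ0 : (0:ℝ) < 1 + σ := by linarith
  have hd : (0:ℝ) < σ * (N - 2) - 1 := by nlinarith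
  have hμ' : μ = 1 / (1 + σ) := by
    rw [eq_div_iff hσ0.ne']; exact hμ
  set P₁ : ℝ × ℝ := (-1 / N, 1 - 1 / N) with hP₁
  set P₂ : ℝ × ℝ := (1 - 1 / N, -1 / N) with hP₂
  set P₃ : ℝ × ℝ := ((1 / 2) * (1 - 1 / N), (1 / 2) * (1 - 1 / N)) with hP₃
  set P₄ : ℝ × ℝ := (μ * ((1 / 2) * (1 - 1 / N)), μ * ((1 / 2) * (1 - 1 / N))) with hP₄
  have hm1 : P₁ ∈ ({P₁, P₂, P₃, P₄} : Set (ℝ × ℝ)) := by simp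
  have hm2 : P₂ ∈ ({P₁, P₂, P₃, P₄} : Set (ℝ × ℝ)) := by simp
  have hm3 : P₃ ∈ ({P₁, P₂, P₃, P₄} : Set (ℝ × ℝ)) := by simp
  have hm4 : P₄ ∈ ({P₁, P₂, P₃, P₄} : Set (ℝ × ℝ)) := by simp
  apply Set.Subset.antisymm
  · rintro ⟨x, y⟩ ⟨h1, h2, h3, h4⟩
    simp only [Set.mem_setOf_eq] at h1 h2 h3 h4
    rcases le_or_gt ((N - 2) / N) (x + y) with hc | hc
    · -- triangle P₁ P₂ P₃
      set α := (N - 1) / 2 * (1 - ((N + 1) / (N - 1)) * x - y) with hα_def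
      set β := (N - 1) / 2 * (1 - x - ((N + 1) / (N - 1)) * y) with hβ_def
      set γ := N * (x + y) - (N - 2) with hγ_def
      have hα : 0 ≤ α := mul_nonneg (by linarith) h1
      have hβ : 0 ≤ β := mul_nonneg (by linarith) h4
      have hγ : 0 ≤ γ := by
        have := (div_le_iff₀ hN0).mp hc
        simp only [hγ_def]; nlinarith
      have hsum : α + β + γ = 1 := by
        simp only [hα_def, hβ_def, hγ_def]
        field_simp
        ring
      have hpt : α • P₁ + β • P₂ + γ • P₃ = (x, y) := by
        simp only [hP₁, hP₂, hP₃, Prod.smul_mk, smul_eq_mul, Prod.mk_add_mk,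
          Prod.mk.injEq, hα_def, hβ_def, hγ_def]
        constructor <;> (field_simp; try ring)
      exact hpt ▸ combo3 hm1 hm2 hm3 hα hβ hγ hsum
    · -- triangle P₁ P₂ P₄
      set α := (N - 1) / (2 * (σ * (N - 2) - 1)) *
        (-1 + ((1 + N + 2 * σ) / (N - 1)) * x + (1 + 2 * σ) * y) with hα_def
      set β := (N - 1) / (2 * (σ * (N - 2) - 1)) *
        (-1 + (1 + 2 * σ) * x + ((1 + N + 2 * σ) / (N - 1)) * y) with hβ_def
      set γ := N * (1 + σ) / (σ * (N - 2) - 1) * ((N - 2) / N - (x + y)) with hγ_def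
      have hα : 0 ≤ α := mul_nonneg (by positivity) h2
      have hβ : 0 ≤ β := mul_nonneg (by positivity) h3
      have hγ : 0 ≤ γ := mul_nonneg (by positivity) (by linarith)
      have hsum : α + β + γ = 1 := by
        simp only [hα_def, hβ_def, hγ_def]
        field_simp
        ring
      have hpt : α • P₁ + β • P₂ + γ • P₄ = (x, y) := by
        simp only [hP₁, hP₂, hP₄, Prod.smul_mk, smul_eq_mul, Prod.mk_add_mk,
          Prod.mk.injEq, hα_def, hβ_def, hγ_def, hμ']
        constructor <;> (field_simp; try ring)
      exact hpt ▸ combo3 hm1 hm2 hm4 hα hβ hγ hsum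
  · apply convexHull_min
    · rintro p hp
      simp only [Set.mem_insert_iff, Set.mem_singleton_iff] at hp
      rcases hp with h | h | h | h <;> subst h <;>
        refine ⟨?_, ?_, ?_, ?_⟩ <;> simp only [hP₁, hP₂, hP₃, hP₄, hμ']
      -- P₁
      · have e : 1 - ((N + 1) / (N - 1)) * (-1 / N) - (1 - 1 / N) = 2 / (N - 1) := by
          field_simp; try ring
        rw [e]; positivity
      · have e : -1 + ((1 + N + 2 * σ) / (N - 1)) * (-1 / N) + (1 + 2 * σ) * (1 - 1 / N)
            = 2 * (σ * (N - 2) - 1) / (N - 1) := by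
          field_simp; try ring
        rw [e]; positivity
      · have e : -1 + (1 + 2 * σ) * (-1 / N) + ((1 + N + 2 * σ) / (N - 1)) * (1 - 1 / N)
            = 0 := by field_simp; try ring
        rw [e]
      · have e : 1 - (-1 / N) - ((N + 1) / (N - 1)) * (1 - 1 / N) = 0 := by
          field_simp; try ring
        rw [e]
      -- P₂
      · have e : 1 - ((N + 1) / (N - 1)) * (1 - 1 / N) - (-1 / N) = 0 := by
          field_simp; try ring
        rw [e]
      · have e : -1 + ((1 + N + 2 * σ) / (N - 1)) * (1 - 1 / N) + (1 + 2 * σ) * (-1 / N)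
            = 0 := by field_simp; try ring
        rw [e]
      · have e : -1 + (1 + 2 * σ) * (1 - 1 / N) + ((1 + N + 2 * σ) / (N - 1)) * (-1 / N)
            = 2 * (σ * (N - 2) - 1) / (N - 1) := by
          field_simp; try ring
        rw [e]; positivity
      · have e : 1 - (1 - 1 / N) - ((N + 1) / (N - 1)) * (-1 / N) = 2 / (N - 1) := by
          field_simp; try ring
        rw [e]; positivity
      -- P₃
      · have e : 1 - ((N + 1) / (N - 1)) * ((1 / 2) * (1 - 1 / N))
            - (1 / 2) * (1 - 1 / N) = 0 := by field_simp; try ring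
        rw [e]
      · have e : -1 + ((1 + N + 2 * σ) / (N - 1)) * ((1 / 2) * (1 - 1 / N))
            + (1 + 2 * σ) * ((1 / 2) * (1 - 1 / N)) = σ := by field_simp; try ring
        rw [e]; positivity
      · have e : -1 + (1 + 2 * σ) * ((1 / 2) * (1 - 1 / N))
            + ((1 + N + 2 * σ) / (N - 1)) * ((1 / 2) * (1 - 1 / N)) = σ := by
          field_simp; try ring
        rw [e]; positivity
      · have e : 1 - (1 / 2) * (1 - 1 / N)
            - ((N + 1) / (N - 1)) * ((1 / 2) * (1 - 1 / N)) = 0 := by field_simp; try ring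
        rw [e]
      -- P₄
      · have e : 1 - ((N + 1) / (N - 1)) * (1 / (1 + σ) * ((1 / 2) * (1 - 1 / N)))
            - 1 / (1 + σ) * ((1 / 2) * (1 - 1 / N)) = σ / (1 + σ) := by field_simp; try ring
        rw [e]; positivity
      · have e : -1 + ((1 + N + 2 * σ) / (N - 1)) * (1 / (1 + σ) * ((1 / 2) * (1 - 1 / N)))
            + (1 + 2 * σ) * (1 / (1 + σ) * ((1 / 2) * (1 - 1 / N))) = 0 := by
          field_simp; try ring
        rw [e]
      · have e : -1 + (1 + 2 * σ) * (1 / (1 + σ) * ((1 / 2) * (1 - 1 / N)))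
            + ((1 + N + 2 * σ) / (N - 1)) * (1 / (1 + σ) * ((1 / 2) * (1 - 1 / N))) = 0 := by
          field_simp; try ring
        rw [e]
      · have e : 1 - 1 / (1 + σ) * ((1 / 2) * (1 - 1 / N))
            - ((N + 1) / (N - 1)) * (1 / (1 + σ) * ((1 / 2) * (1 - 1 / N))) = σ / (1 + σ) := by
          field_simp; try ring
        rw [e]; positivity
    · intro p hp q hq u v hu hv huv
      obtain ⟨h1p, h2p, h3p, h4p⟩ := hp
      obtain ⟨h1q, h2q, h3q, h4q⟩ := hq
      refine ⟨?_, ?_, ?_, ?_⟩ <;>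
        simp only [Prod.fst_add, Prod.snd_add, Prod.smul_fst, Prod.smul_snd,
          smul_eq_mul] <;>
        nlinarith [mul_nonneg hu h1p, mul_nonneg hv h1q, mul_nonneg hu h2p,
          mul_nonneg hv h2q, mul_nonneg hu h3p, mul_nonneg hv h3q,
          mul_nonneg hu h4p, mul_nonneg hv h4q]

/-- The rescaled limit shape of the orbit tiles: for `n ≥ 3`, with
`σ = sec(π/n)`, `a = (1/2)(1 − 1/n)` and `μ = (1/2)(1 − tan²(π/2n))`, the region
where the four affine functions `u₁, u₂, u₃, u₄` are nonnegative equals the convex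
hull of `(−1/n, 1−1/n)`, `(1−1/n, −1/n)`, `(a,a)` and `(μa, μa)`. -/
theorem tile_limit_shape (n : ℕ) (hn : 3 ≤ n)
    (σ a μ : ℝ)
    (hσ : σ = 1 / Real.cos (Real.pi / n))
    (ha : a = (1 / 2) * (1 - 1 / (n : ℝ)))
    (hμ : μ = (1 / 2) * (1 - Real.tan (Real.pi / (2 * n)) ^ 2)) :
    {p : ℝ × ℝ |
        0 ≤ 1 - (((n : ℝ) + 1) / ((n : ℝ) - 1)) * p.1 - p.2 ∧
        0 ≤ -1 + ((1 + (n : ℝ) + 2 * σ) / ((n : ℝ) - 1)) * p.1 + (1 + 2 * σ) * p.2 ∧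
        0 ≤ -1 + (1 + 2 * σ) * p.1 + ((1 + (n : ℝ) + 2 * σ) / ((n : ℝ) - 1)) * p.2 ∧
        0 ≤ 1 - p.1 - (((n : ℝ) + 1) / ((n : ℝ) - 1)) * p.2} =
      convexHull ℝ
        ({(-1 / (n : ℝ), 1 - 1 / (n : ℝ)), (1 - 1 / (n : ℝ), -1 / (n : ℝ)),
          (a, a), (μ * a, μ * a)} : Set (ℝ × ℝ)) := by
  have hN : (3:ℝ) ≤ (n : ℝ) := by exact_mod_cast hn
  have hn0 : (0:ℝ) < (n : ℝ) := by linarith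
  have hπ := Real.pi_pos
  -- π/n ∈ (0, π/2)
  have hπn2 : Real.pi / n < Real.pi / 2 := by
    rw [div_lt_div_iff₀ hn0 (by norm_num : (0:ℝ) < 2)]
    nlinarith
  have hπn0 : 0 < Real.pi / n := by positivity
  have hcos_pos : 0 < Real.cos (Real.pi / n) :=
    Real.cos_pos_of_mem_Ioo ⟨by linarith, hπn2⟩
  have hsin_pos : 0 < Real.sin (Real.pi / n) :=
    Real.sin_pos_of_pos_of_lt_pi hπn0 (by linarith)
  have hcos_lt : Real.cos (Real.pi / n) < 1 := by
    nlinarith [Real.sin_sq_add_cos_sq (Real.pi / n)]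
  have hσ1 : 1 < σ := by rw [hσ]; exact one_lt_one_div hcos_pos hcos_lt
  -- the half-angle
  set θ := Real.pi / (2 * (n : ℝ)) with hθdef
  have hθeq : Real.pi / n = 2 * θ := by rw [hθdef]; field_simp; try ring
  have hθ0 : 0 < θ := by rw [hθdef]; positivity
  have hθ2 : θ < Real.pi / 2 := by
    rw [hθdef, div_lt_div_iff₀ (by positivity) (by norm_num : (0:ℝ) < 2)]
    nlinarith
  have hcθ : 0 < Real.cos θ := Real.cos_pos_of_mem_Ioo ⟨by linarith, hθ2⟩
  have hc2 : Real.cos (Real.pi / n) = 2 * Real.cos θ ^ 2 - 1 := by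
    rw [hθeq, Real.cos_two_mul]
  have h2c : (0:ℝ) < 2 * Real.cos θ ^ 2 - 1 := hc2 ▸ hcos_pos
  have hμ2 : μ * (1 + σ) = 1 := by
    rw [hμ, hσ, hc2, Real.tan_eq_sin_div_cos, div_pow, Real.sin_sq]
    field_simp [hcθ.ne', h2c.ne']
    ring
  subst ha
  exact tile_alg (n : ℝ) σ μ hN hσ1 hμ2
end
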